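/- arXiv:1702.06301 — 7 statements merged into one kernel-verified Lean document; each statement's English description precedes it below -/
import Mathlib

section
/- Let $\sigma$ be a finite non-atomic Borel measure on $\mathbb{R}^d$ ($d \geq 1$). Then there exists a direction $y \in \mathbb{R}^d \setminus \{0\}$ such that $\sigma(H) = 0$ for every affine hyperplane $H$ orthogonal to $y$. -/
/-!
Let `ν` be the law of `X - X'` for independent `X, X' ∼ σ`. Since `σ` has no atoms, `ν {0} = 0`,
and `σ(H)² ≤ ν(H - H)` for every affine hyperplane `H`, where `H - H` is the parallel linear
hyperplane; so it suffices to find `y ≠ 0` with `ν yᗮ = 0`. Two distinct subspaces that are minimal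
among those of positive `ν`-measure meet in a `ν`-null set, so there are only countably many of
them, and none of them is `{0}`. Choose `y ≠ 0` outside the countably many proper subspaces `Wᗮ`;
if `yᗮ` were not null it would contain such a minimal `W`, i.e. `y ∈ Wᗮ`.
-/

open MeasureTheory Set Function

namespace MeasureTheory.Measure

variable {G : Type*} [AddGroup G] [MeasurableSpace G] [MeasurableSub₂ G]

noncomputable def diffMeasure (σ : Measure G) : Measure G :=
  (σ.prod σ).map fun p => p.1 - p.2

variable (σ : Measure G) [SFinite σ]

instance : SFinite σ.diffMeasure := by
  rw [diffMeasure]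
  infer_instance

theorem diffMeasure_singleton_zero [MeasurableSingletonClass G] [NullSingletonClass σ] :
    σ.diffMeasure {0} = 0 := by
  have hsection (x : G) : Prod.mk x ⁻¹' ((fun p : G × G => p.1 - p.2) ⁻¹' {0}) = {x} := by
    ext; simp [sub_eq_zero, eq_comm]
  have hzero : MeasurableSet {(0 : G)} := measurableSet_singleton 0
  rw [diffMeasure, map_apply measurable_sub hzero, prod_apply (measurable_sub hzero)]
  simp [hsection]

theorem measure_mul_self_le_diffMeasure {s t : Set G} (ht : MeasurableSet t)
    (hst : ∀ a ∈ s, ∀ b ∈ s, a - b ∈ t) : σ s * σ s ≤ σ.diffMeasure t := by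
  rw [diffMeasure, map_apply measurable_sub ht, ← prod_prod]
  exact measure_mono fun p ⟨ha, hb⟩ => hst _ ha _ hb

end MeasureTheory.Measure

section FiniteDimensional

variable {E : Type*} [NormedAddCommGroup E] [NormedSpace ℝ E] [FiniteDimensional ℝ E]
  [MeasurableSpace E] [BorelSpace E]

theorem Submodule.exists_forall_notMem_of_countable {P : Set (Submodule ℝ E)} (hP : P.Countable)
    (htop : ⊤ ∉ P) : ∃ y : E, ∀ p ∈ P, y ∉ p := by
  have hnull : Measure.addHaar (⋃ p ∈ P, (p : Set E)) = 0 :=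
    (measure_biUnion_null_iff hP).2 fun p hp =>
      Measure.addHaar_submodule _ p fun h => htop (h ▸ hp)
  by_contra! hcover
  rw [show (⋃ p ∈ P, (p : Set E)) = univ from
    eq_univ_of_forall fun y => by simpa using hcover y] at hnull
  exact isOpen_univ.measure_ne_zero _ univ_nonempty hnull

theorem Submodule.countable_setOf_minimal_measure_ne_zero (μ : Measure E) [SFinite μ] :
    {W : Submodule ℝ E | Minimal (fun W : Submodule ℝ E => μ W ≠ 0) W}.Countable := by
  set S := {W : Submodule ℝ E | Minimal (fun W : Submodule ℝ E => μ W ≠ 0) W}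
  have hdisj : Pairwise (AEDisjoint μ on fun W : S => ((W : Submodule ℝ E) : Set E)) := by
    rintro ⟨W, hW⟩ ⟨W', hW'⟩ hne
    by_contra h
    have hinf : μ (W ⊓ W' : Submodule ℝ E) ≠ 0 := h
    have hle : W ≤ W' := (hW.2 hinf inf_le_left).trans inf_le_right
    exact hne (Subtype.ext (le_antisymm hle (hW'.2 hW.1 hle)))
  have := Measure.countable_meas_pos_of_disjoint_iUnion₀ (μ := μ)
    (fun W : S => (Submodule.closed_of_finiteDimensional _).measurableSet.nullMeasurableSet) hdisj
  rw [← countable_coe_iff, ← countable_univ_iff]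
  simpa [pos_iff_ne_zero, fun W : S => W.2.1] using this

end FiniteDimensional

section InnerProductSpace

variable {E : Type*} [NormedAddCommGroup E] [InnerProductSpace ℝ E] [FiniteDimensional ℝ E]
  [MeasurableSpace E] [BorelSpace E] [Nontrivial E]

theorem exists_ne_zero_measure_orthogonal_eq_zero (ν : Measure E) [SFinite ν] (h0 : ν {0} = 0) :
    ∃ y : E, y ≠ 0 ∧ ν (ℝ ∙ y)ᗮ = 0 := by
  set S := {W : Submodule ℝ E | Minimal (fun W : Submodule ℝ E => ν W ≠ 0) W}
  have hS : (insert ⊥ (Submodule.orthogonal '' S)).Countable :=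
    ((Submodule.countable_setOf_minimal_measure_ne_zero ν).image _).insert ⊥
  have htop : ⊤ ∉ insert ⊥ (Submodule.orthogonal '' S) := by
    rintro (h | ⟨W, hW, h⟩)
    · exact bot_ne_top h.symm
    · rw [Submodule.orthogonal_eq_top_iff] at h
      exact hW.1 (by simpa [h] using h0)
  obtain ⟨y, hy⟩ := Submodule.exists_forall_notMem_of_countable hS htop
  refine ⟨y, fun h => hy ⊥ (mem_insert _ _) (h ▸ zero_mem _), ?_⟩
  by_contra hne
  obtain ⟨W, hWy, hW⟩ :=
    exists_minimal_le_of_wellFoundedLT (fun W : Submodule ℝ E => ν W ≠ 0) _ hne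
  refine hy Wᗮ (mem_insert_of_mem _ ⟨W, hW, rfl⟩) ((Submodule.mem_orthogonal _ _).2 fun u hu => ?_)
  exact Submodule.mem_orthogonal_singleton_iff_inner_left.1 (hWy hu)

theorem exists_ne_zero_forall_measure_inner_eq_zero (σ : Measure E) [SFinite σ]
    [NullSingletonClass σ] : ∃ y : E, y ≠ 0 ∧ ∀ t : ℝ, σ {x | inner ℝ x y = t} = 0 := by
  obtain ⟨y, hy0, hnull⟩ :=
    exists_ne_zero_measure_orthogonal_eq_zero σ.diffMeasure σ.diffMeasure_singleton_zero
  refine ⟨y, hy0, fun t => ?_⟩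
  have hle := σ.measure_mul_self_le_diffMeasure
    (Submodule.isClosed_orthogonal (ℝ ∙ y)).measurableSet
    fun a (ha : inner ℝ a y = t) b (hb : inner ℝ b y = t) => by
      rw [SetLike.mem_coe, Submodule.mem_orthogonal_singleton_iff_inner_left, inner_sub_left,
        ha, hb, sub_self]
  rwa [hnull, nonpos_iff_eq_zero, mul_self_eq_zero] at hle

end InnerProductSpace

theorem exists_direction_null_hyperplanes
    {d : ℕ} (hd : 1 ≤ d) (σ : Measure (EuclideanSpace ℝ (Fin d)))
    [IsFiniteMeasure σ] [NullSingletonClass σ] :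
    ∃ y : EuclideanSpace ℝ (Fin d), y ≠ 0 ∧
      ∀ t : ℝ, σ {x | inner ℝ x y = (t : ℝ)} = 0 := by
  have : Nonempty (Fin d) := ⟨⟨0, hd⟩⟩
  exact exists_ne_zero_forall_measure_inner_eq_zero σ
end

section
/- Let $\sigma$ be a finite non-atomic Borel measure on $\mathbb{R}^d$ and let $b_1, \dotsc, b_k$ be non-negative reals with $b_1 + \dotsb + b_k < \sigma(\mathbb{R}^d)$. Then there exist pairwise disjoint measurable sets $E_0, E_1, \dotsc, E_k$ covering $\mathbb{R}^d$ such that $\sigma(E_j) = b_j$ for $j = 1, \dotsc, k$, and such that for all $i \neq j$ with $i, j \geq 1$, the distance between $E_i$ and $E_j$ is strictly positive. -/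
/-!
Sierpiński's theorem does the work: pushing the measure to `ℝ` along the Borel embedding
`embeddingReal`, its distribution function is continuous because there are no atoms, so the
intermediate value theorem produces subsets of any prescribed mass. As the masses `b j` leave
room, carve out disjoint sets of masses `b j + ε j`, shrink each to a compact subset still of mass
above `b j` (inner regularity), and cut a subset of mass exactly `b j` out of it. Disjoint compact
sets lie at positive distance.
-/

open MeasureTheory Set Filter Topology Function
open scoped ENNReal symmDiff

theorem continuous_measureReal_Iic (ν : Measure ℝ) [IsFiniteMeasure ν] [NullSingletonClass ν] :
    Continuous fun t => ν.real (Iic t) := by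
  refine continuous_iff_continuousAt.2 fun b => ?_
  have hdist : Tendsto (fun t => dist t b) (𝓝 b) (𝓝 0) := by
    simpa using (tendsto_id (x := 𝓝 b)).dist (tendsto_const_nhds (x := b))
  have hshrink : Tendsto (fun t => ν.real (Icc (b - dist t b) (b + dist t b))) (𝓝 b) (𝓝 0) :=
    (ENNReal.tendsto_toReal ENNReal.zero_ne_top).comp ((tendsto_measure_Icc ν b).comp hdist)
  refine tendsto_iff_dist_tendsto_zero.2
    (squeeze_zero (fun _ => dist_nonneg) (fun t => ?_) hshrink)
  calc dist (ν.real (Iic t)) (ν.real (Iic b)) ≤ ν.real (Iic t ∆ Iic b) :=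
        abs_measureReal_sub_le_measureReal_symmDiff nullMeasurableSet_Iic nullMeasurableSet_Iic
    _ ≤ ν.real (Icc (b - dist t b) (b + dist t b)) := by
        refine measureReal_mono (fun x hx => ?_)
        simp only [mem_symmDiff, mem_Iic, not_le, mem_Icc, Real.dist_eq] at hx ⊢
        constructor <;> cases abs_cases (t - b) <;> rcases hx with h | h <;> linarith [h.1, h.2]

theorem exists_measure_Iic_eq (ν : Measure ℝ) [IsFiniteMeasure ν] [NullSingletonClass ν]
    {r : ℝ≥0∞} (hr0 : 0 < r) (hr : r < ν univ) : ∃ t, ν (Iic t) = r := by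
  have hbot : Tendsto (fun t => ν (Iic t)) atBot (𝓝 0) := by
    have hempty : ⋂ t : ℝ, Iic t = ∅ := iInter_Iic_eq_empty_iff.2 (by simp)
    simpa [comp_def, hempty] using tendsto_measure_iInter_atBot (μ := ν)
      (fun _ => nullMeasurableSet_Iic) monotone_Iic ⟨0, measure_ne_top ν _⟩
  obtain ⟨a, ha⟩ := (hbot.eventually (gt_mem_nhds hr0)).exists
  obtain ⟨b, hb⟩ := ((tendsto_measure_Iic_atTop ν).eventually (lt_mem_nhds hr)).exists
  have hr_top : r ≠ ∞ := ne_top_of_lt hr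
  obtain ⟨t, ht⟩ := mem_range_of_exists_le_of_exists_ge (continuous_measureReal_Iic ν)
    ⟨a, ENNReal.toReal_mono hr_top ha.le⟩ ⟨b, ENNReal.toReal_mono (measure_ne_top ν _) hb.le⟩
  exact ⟨t, (ENNReal.toReal_eq_toReal_iff' (measure_ne_top ν _) hr_top).1 ht⟩

section NonatomicFinite

variable {X : Type*} [MeasurableSpace X] [StandardBorelSpace X] (μ : Measure X)
  [IsFiniteMeasure μ] [NullSingletonClass μ]

theorem exists_subset_measure_eq {A : Set X} (hA : MeasurableSet A)
    {r : ℝ≥0∞} (hr : r ≤ μ A) : ∃ B ⊆ A, MeasurableSet B ∧ μ B = r := by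
  rcases eq_or_ne r 0 with rfl | hr0
  · exact ⟨∅, empty_subset A, .empty, measure_empty⟩
  rcases hr.eq_or_lt with rfl | hrA
  · exact ⟨A, subset_rfl, hA, rfl⟩
  have hφ := measurableEmbedding_embeddingReal X
  set ν := (μ.restrict A).map (embeddingReal X)
  have : NullSingletonClass ν := ⟨fun t => by
    rw [hφ.map_apply]
    exact (subsingleton_singleton.preimage hφ.injective).measure_zero _⟩
  obtain ⟨t, ht⟩ := exists_measure_Iic_eq ν (pos_iff_ne_zero.2 hr0)
    (by rwa [hφ.map_apply, preimage_univ, Measure.restrict_apply_univ])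
  refine ⟨A ∩ embeddingReal X ⁻¹' Iic t, inter_subset_left,
    hA.inter (hφ.measurable measurableSet_Iic), ?_⟩
  rwa [hφ.map_apply, Measure.restrict_apply' hA, inter_comm] at ht

theorem exists_pairwiseDisjoint_measure_eq {ι : Type*} (s : Finset ι)
    (c : ι → ℝ≥0∞) {A : Set X} (hA : MeasurableSet A) (hc : ∑ i ∈ s, c i ≤ μ A) :
    ∃ F : ι → Set X, (∀ i ∈ s, F i ⊆ A ∧ MeasurableSet (F i) ∧ μ (F i) = c i) ∧
      (s : Set ι).PairwiseDisjoint F := by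
  classical
  induction s using Finset.induction_on generalizing A with
  | empty => exact ⟨fun _ => ∅, by simp, by simp⟩
  | insert a s ha ih =>
    rw [Finset.sum_insert ha] at hc
    obtain ⟨G, hGA, hGm, hGμ⟩ := exists_subset_measure_eq μ hA (le_self_add.trans hc)
    have hrest : ∑ i ∈ s, c i ≤ μ (A \ G) := by
      rw [measure_sdiff hGA hGm.nullMeasurableSet (measure_ne_top μ G), hGμ]
      exact ENNReal.le_sub_of_add_le_left (ne_top_of_le_ne_top (measure_ne_top μ A)
        (le_self_add.trans hc)) hc
    obtain ⟨F, hF, hFd⟩ := ih (hA.diff hGm) hrest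
    have hupd : ∀ i ∈ s, update F a G i = F i := fun i hi =>
      update_of_ne (ne_of_mem_of_not_mem hi ha) _ _
    refine ⟨update F a G, Finset.forall_mem_insert _ _ _ |>.2 ⟨?_, fun i hi => ?_⟩, ?_⟩
    · simpa using ⟨hGA, hGm, hGμ⟩
    · rw [hupd i hi]
      exact ⟨(hF i hi).1.trans sdiff_subset, (hF i hi).2⟩
    · rw [Finset.coe_insert]
      refine (hFd.mono_on fun i hi => (hupd i hi).le).insert fun j hj _ => ?_
      rw [update_self, hupd j hj]
      exact disjoint_sdiff_right.mono_right (hF j hj).1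

end NonatomicFinite

theorem IsCompact.areSeparated_of_disjoint {X : Type*} [PseudoEMetricSpace X] {K L : Set X}
    (hK : IsCompact K) (hL : IsClosed L) (hKL : Disjoint K L) : Metric.AreSeparated K L :=
  let ⟨r, hr0, hr⟩ := Metric.exists_pos_forall_lt_edist hK hL hKL
  ⟨r, by exact_mod_cast hr0.ne', fun x hx y hy => (hr x hx y hy).le⟩

theorem Metric.AreSeparated.exists_pos_forall_le_dist {X : Type*} [PseudoMetricSpace X]
    {s t : Set X} (h : Metric.AreSeparated s t) :
    ∃ ε > (0 : ℝ), ∀ x ∈ s, ∀ y ∈ t, ε ≤ dist x y := by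
  obtain ⟨r, hr0, hr⟩ := h
  refine ⟨(min r 1).toReal, ENNReal.toReal_pos (by simp [hr0]) (by simp), fun x hx y hy => ?_⟩
  rw [← ENNReal.ofReal_le_ofReal_iff dist_nonneg, ENNReal.ofReal_toReal (by simp), ← edist_dist]
  exact (min_le_left r 1).trans (hr x hx y hy)

theorem exists_areSeparated_measure_eq {X : Type*} [MetricSpace X] [CompleteSpace X]
    [SecondCountableTopology X] [MeasurableSpace X] [BorelSpace X] (μ : Measure X)
    [IsFiniteMeasure μ] [NullSingletonClass μ] {ι : Type*} [Fintype ι] (c : ι → ℝ≥0∞)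
    (hc : ∑ i, c i < μ univ) :
    ∃ E : ι → Set X, (∀ i, MeasurableSet (E i) ∧ μ (E i) = c i) ∧
      Pairwise (Metric.AreSeparated on E) := by
  obtain ⟨ε, hε0, hε⟩ := ENNReal.exists_pos_sum_of_countable (tsub_pos_of_lt hc).ne' ι
  have hslack : ∑ i, (c i + ε i) ≤ μ univ :=
    calc ∑ i, (c i + ε i) = ∑ i, c i + ∑ i, (ε i : ℝ≥0∞) := Finset.sum_add_distrib
      _ ≤ ∑ i, c i + (μ univ - ∑ i, c i) := by
          gcongr
          exact (ENNReal.sum_le_tsum _).trans hε.le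
      _ = μ univ := add_tsub_cancel_of_le hc.le
  obtain ⟨F, hF, hFd⟩ := exists_pairwiseDisjoint_measure_eq μ Finset.univ _ .univ hslack
  have hK : ∀ i, ∃ K ⊆ F i, IsCompact K ∧ c i < μ K := fun i => by
    obtain ⟨-, hFm, hFμ⟩ := hF i (Finset.mem_univ i)
    refine hFm.exists_lt_isCompact_of_ne_top (measure_ne_top μ _) ?_
    rw [hFμ]
    have hci : c i ≠ ∞ := ne_top_of_lt <|
      (Finset.single_le_sum (fun _ _ => zero_le) (Finset.mem_univ i)).trans_lt hc
    exact ENNReal.lt_add_right hci (by simpa using (hε0 i).ne')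
  choose K hKF hKc hcK using hK
  have hE : ∀ i, ∃ E ⊆ K i, MeasurableSet E ∧ μ E = c i := fun i =>
    exists_subset_measure_eq μ (hKc i).measurableSet (hcK i).le
  choose E hEK hEm hEμ using hE
  refine ⟨E, fun i => ⟨hEm i, hEμ i⟩, fun i j hij => ?_⟩
  have hKd : Disjoint (K i) (K j) :=
    (hFd (Finset.mem_coe.2 (Finset.mem_univ i)) (Finset.mem_coe.2 (Finset.mem_univ j)) hij).mono
      (hKF i) (hKF j)
  exact ((hKc i).areSeparated_of_disjoint (hKc j).isClosed hKd).mono (hEK i) (hEK j)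

theorem pairwise_disjoint_fin_cons_compl_iUnion {α : Type*} {n : ℕ} {E : Fin n → Set α}
    (hE : Pairwise (Disjoint on E)) :
    Pairwise (Disjoint on (Fin.cons (⋃ j, E j)ᶜ E : Fin (n + 1) → Set α)) := by
  intro i j hij
  cases i using Fin.cases <;> cases j using Fin.cases
  · exact absurd rfl hij
  · exact disjoint_compl_left.mono_right (subset_iUnion E _)
  · exact disjoint_compl_right.mono_left (subset_iUnion E _)
  · exact hE (fun h => hij (congrArg Fin.succ h))

theorem iUnion_fin_cons_compl_iUnion {α : Type*} {n : ℕ} (E : Fin n → Set α) :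
    ⋃ j, (Fin.cons (⋃ j, E j)ᶜ E : Fin (n + 1) → Set α) j = univ := by
  refine eq_univ_of_forall fun x => ?_
  simp only [mem_iUnion, Fin.exists_fin_succ, Fin.cons_zero, Fin.cons_succ, mem_compl_iff]
  exact (em _).symm

theorem exists_partition_prescribed_masses_separated_general
    {d : ℕ} (σ : Measure (EuclideanSpace ℝ (Fin d)))
    [IsFiniteMeasure σ] [NullSingletonClass σ]
    {k : ℕ} (b : Fin k → ℝ)
    (hb : ∀ j, 0 ≤ b j)
    (hsum : ∑ j, b j < (σ Set.univ).toReal) :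
    ∃ E : Fin (k + 1) → Set (EuclideanSpace ℝ (Fin d)),
      (∀ j, MeasurableSet (E j)) ∧
      Pairwise (fun i j => Disjoint (E i) (E j)) ∧
      (⋃ j, E j) = Set.univ ∧
      (∀ j : Fin k, σ (E j.succ) = ENNReal.ofReal (b j)) ∧
      (∀ i j : Fin k, i ≠ j → ∃ ε > (0 : ℝ),
        ∀ a ∈ E i.succ, ∀ c ∈ E j.succ, ε ≤ dist a c) := by
  have hmass : ∑ j, ENNReal.ofReal (b j) < σ univ := by
    rw [← ENNReal.ofReal_sum_of_nonneg fun j _ => hb j]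
    exact (ENNReal.ofReal_lt_iff_lt_toReal (Finset.sum_nonneg fun j _ => hb j)
      (measure_ne_top σ _)).2 hsum
  obtain ⟨E, hE, hsep⟩ := exists_areSeparated_measure_eq σ _ hmass
  refine ⟨Fin.cons (⋃ j, E j)ᶜ E, fun j => ?_,
    pairwise_disjoint_fin_cons_compl_iUnion fun i j hij => (hsep hij).disjoint,
    iUnion_fin_cons_compl_iUnion E, fun j => by simpa using (hE j).2,
    fun i j hij => by simpa using (hsep hij).exists_pos_forall_le_dist⟩
  cases j using Fin.cases
  · exact (MeasurableSet.iUnion fun j => (hE j).1).compl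
  · simpa using (hE _).1

theorem exists_partition_prescribed_masses_separated
    {d : ℕ} (σ : Measure (EuclideanSpace ℝ (Fin d)))
    [IsFiniteMeasure σ] [NullSingletonClass σ]
    {k : ℕ} (hk : 0 < k) (b : Fin k → ℝ)
    (hb : ∀ j, 0 ≤ b j)
    (hsum : ∑ j, b j < (σ Set.univ).toReal) :
    ∃ E : Fin (k + 1) → Set (EuclideanSpace ℝ (Fin d)),
      (∀ j, MeasurableSet (E j)) ∧
      Pairwise (fun i j => Disjoint (E i) (E j)) ∧
      (⋃ j, E j) = Set.univ ∧
      (∀ j : Fin k, σ (E j.succ) = ENNReal.ofReal (b j)) ∧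
      (∀ i j : Fin k, i ≠ j → ∃ ε > (0 : ℝ),
        ∀ a ∈ E i.succ, ∀ c ∈ E j.succ, ε ≤ dist a c) :=
  exists_partition_prescribed_masses_separated_general σ b hb hsum
end

section
/- Let $N \geq 2$, $k \geq N+2$, and let $b_1 \geq b_2 \geq \dotsb \geq b_k > 0$ satisfy $(N-1)b_1 \leq \sum_{j=2}^k b_j$. Then there exist real numbers $t_2, \dotsc, t_k$ such that: (i) $t_2 + \dotsb + t_k = (N-1)b_1$; (ii) $0 \leq t_j \leq b_j$ for all $j$, $t_2 \geq t_3 \geq \dotsb \geq t_k$, and $b_2 - t_2 \geq b_3 - t_3 \geq \dotsb \geq b_k - t_k$; (iii) $(N-2)t_2 \leq \sum_{j=3}^k t_j$; (iv) $(N-1)(b_2 - t_2) \leq \sum_{j=3}^k (b_j - t_j)$. -/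
/-!
Take the water-filling choice `t j = (b j - λ)⁺`, with the level `λ ∈ [0, b 2]` fixed by the
intermediate value theorem so that `∑ t j = (N - 1) b 1`. Then `b j - t j = min (b j) λ`, and
all monotonicity claims are immediate. For (iv), at most `N - 1` indices above the level would
give `(N - 1) b 1 ≤ (N - 1) (b 1 - λ)`, so if `λ > 0` at least `N` of the `b j` exceed `λ`, whence
`N λ ≤ ∑_{j ≥ 2} min (b j) λ`.
-/

open Finset

section WaterFilling

variable {ι : Type*} (s : Finset ι) (b : ι → ℝ) (l : ℝ)

theorem exists_sum_posPart_sub_eq {m T : ℝ} (hm : 0 ≤ m) (hb0 : ∀ j ∈ s, 0 ≤ b j)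
    (hbm : ∀ j ∈ s, b j ≤ m) (hT0 : 0 ≤ T) (hT : T ≤ ∑ j ∈ s, b j) :
    ∃ l ∈ Set.Icc 0 m, ∑ j ∈ s, (b j - l)⁺ = T := by
  have hcont : Continuous fun l => ∑ j ∈ s, (b j - l)⁺ := by fun_prop
  have h0 : ∑ j ∈ s, (b j - 0)⁺ = ∑ j ∈ s, b j :=
    sum_congr rfl fun j hj => by rw [sub_zero, posPart_eq_self.2 (hb0 j hj)]
  have hm' : ∑ j ∈ s, (b j - m)⁺ = 0 :=
    sum_eq_zero fun j hj => posPart_eq_zero.2 (sub_nonpos.2 (hbm j hj))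
  exact intermediate_value_Icc' hm hcont.continuousOn ⟨hm' ▸ hT0, h0 ▸ hT⟩

theorem sum_posPart_sub_le_card_mul {B : ℝ} (hbB : ∀ j ∈ s, b j ≤ B) :
    ∑ j ∈ s, (b j - l)⁺ ≤ #{j ∈ s | l < b j} * (B - l) := by
  calc ∑ j ∈ s, (b j - l)⁺ = ∑ j ∈ s with l < b j, (b j - l) := by
        rw [sum_filter]
        refine sum_congr rfl fun j _ => ?_
        split_ifs with h
        · exact posPart_eq_self.2 (sub_nonneg.2 h.le)
        · exact posPart_eq_zero.2 (sub_nonpos.2 (not_lt.1 h))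
    _ ≤ #{j ∈ s | l < b j} • (B - l) :=
        sum_le_card_nsmul _ _ _ fun j hj => sub_le_sub_right (hbB j (mem_filter.1 hj).1) l
    _ = #{j ∈ s | l < b j} * (B - l) := nsmul_eq_mul _ _

theorem card_mul_le_sum_min (hl : 0 ≤ l) (hb0 : ∀ j ∈ s, 0 ≤ b j) :
    #{j ∈ s | l < b j} * l ≤ ∑ j ∈ s, min (b j) l := by
  rw [← sum_filter_add_sum_filter_not s (l < b ·)]
  calc (#{j ∈ s | l < b j} : ℝ) * l = ∑ j ∈ s with l < b j, min (b j) l := by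
        rw [← nsmul_eq_mul, ← sum_const]
        exact sum_congr rfl fun j hj => (min_eq_right (mem_filter.1 hj).2.le).symm
    _ ≤ _ := le_add_of_nonneg_right <|
        sum_nonneg fun j hj => le_min (hb0 j (mem_filter.1 hj).1) hl

theorem succ_mul_le_sum_min_of_mul_le_sum_posPart {n : ℕ} {B : ℝ} (hn : 0 < n) (hl : 0 ≤ l)
    (hlB : l ≤ B) (hb0 : ∀ j ∈ s, 0 ≤ b j) (hbB : ∀ j ∈ s, b j ≤ B)
    (h : n * B ≤ ∑ j ∈ s, (b j - l)⁺) :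
    (n + 1) * l ≤ ∑ j ∈ s, min (b j) l := by
  refine le_trans ?_ (card_mul_le_sum_min s b l hl hb0)
  rcases hl.eq_or_lt with rfl | hl
  · simp
  have hcard : n < #{j ∈ s | l < b j} := by
    by_contra! hc
    have hle := h.trans (sum_posPart_sub_le_card_mul s b l hbB)
    have hcn : (#{j ∈ s | l < b j} : ℝ) * (B - l) ≤ n * (B - l) :=
      mul_le_mul_of_nonneg_right (by exact_mod_cast hc) (sub_nonneg.2 hlB)
    have : 0 < (n : ℝ) * l := by positivity
    linarith
  exact mul_le_mul_of_nonneg_right (by exact_mod_cast hcard) hl.le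

end WaterFilling

theorem t_lemma
    (N k : ℕ) (hN : 2 ≤ N) (hk : N + 2 ≤ k) (b : ℕ → ℝ)
    (hpos : ∀ j ∈ Icc 1 k, 0 < b j)
    (hmono : ∀ i j, 1 ≤ i → i ≤ j → j ≤ k → b j ≤ b i)
    (hmain : (N - 1 : ℝ) * b 1 ≤ ∑ j ∈ Icc 2 k, b j) :
    ∃ t : ℕ → ℝ,
      (∑ j ∈ Icc 2 k, t j = (N - 1 : ℝ) * b 1) ∧
      (∀ j ∈ Icc 2 k, 0 ≤ t j ∧ t j ≤ b j) ∧
      (∀ i j, 2 ≤ i → i ≤ j → j ≤ k → t j ≤ t i) ∧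
      (∀ i j, 2 ≤ i → i ≤ j → j ≤ k → b j - t j ≤ b i - t i) ∧
      ((N - 2 : ℝ) * t 2 ≤ ∑ j ∈ Icc 3 k, t j) ∧
      ((N - 1 : ℝ) * (b 2 - t 2) ≤ ∑ j ∈ Icc 3 k, (b j - t j)) := by
  have h2k : 2 ≤ k := by omega
  have hsplit (f : ℕ → ℝ) : ∑ j ∈ Icc 2 k, f j = f 2 + ∑ j ∈ Icc 3 k, f j := by
    rw [← insert_Icc_add_one_left_eq_Icc h2k]
    exact sum_insert (by simp)
  have h2mem : 2 ∈ Icc 2 k := by simp [h2k]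
  have hb0 : ∀ j ∈ Icc 2 k, 0 ≤ b j := fun j hj => (hpos j (Icc_subset_Icc_left one_le_two hj)).le
  have hb2 : ∀ j ∈ Icc 2 k, b j ≤ b 2 := fun j hj =>
    hmono 2 j one_le_two (mem_Icc.1 hj).1 (mem_Icc.1 hj).2
  have hb21 : b 2 ≤ b 1 := hmono 1 2 le_rfl one_le_two h2k
  have hN1 : ((N - 1 : ℕ) : ℝ) = N - 1 := by rw [Nat.cast_sub (by omega), Nat.cast_one]
  have hN1_nonneg : (0 : ℝ) ≤ N - 1 := by rw [← hN1]; positivity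
  have hmain0 : 0 ≤ (N - 1 : ℝ) * b 1 := mul_nonneg hN1_nonneg ((hb0 2 h2mem).trans hb21)
  obtain ⟨l, ⟨hl0, hl2⟩, hsum⟩ :=
    exists_sum_posPart_sub_eq (Icc 2 k) b (hb0 2 h2mem) hb0 hb2 hmain0 hmain
  have ht2 : (b 2 - l)⁺ = b 2 - l := posPart_eq_self.2 (sub_nonneg.2 hl2)
  have hmin (j : ℕ) : b j - (b j - l)⁺ = min (b j) l := (inf_eq_sub_posPart_sub _ _).symm
  refine ⟨fun j => (b j - l)⁺, hsum, fun j hj => ⟨posPart_nonneg _, ?_⟩,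
    fun i j hi hij hjk => posPart_mono (sub_le_sub_right (hmono i j (by omega) hij hjk) l),
    fun i j hi hij hjk => ?_, ?_, ?_⟩
  · exact sup_le (by linarith) (hb0 j hj)
  · simp only [hmin]
    exact min_le_min_right l (hmono i j (by omega) hij hjk)
  · have hdrop : (N - 1 : ℝ) * (b 2 - l) ≤ (N - 1) * b 1 :=
      mul_le_mul_of_nonneg_left (by linarith) hN1_nonneg
    rw [hsplit, ht2] at hsum
    simp only [ht2]
    linarith
  · have hwater := succ_mul_le_sum_min_of_mul_le_sum_posPart (Icc 2 k) b l (n := N - 1)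
      (by omega) hl0 (hl2.trans hb21) hb0 (fun j hj => (hb2 j hj).trans hb21) (by rw [hsum, hN1])
    simp only [hmin] at hwater ⊢
    rw [hsplit, hN1] at hwater
    rw [min_eq_right hl2] at hwater ⊢
    linarith
end

section
/- Let $k > N \geq 1$, let $x_1, \dotsc, x_k \in \mathbb{R}^d$ be distinct, and let $b_1 \geq \dotsb \geq b_k > 0$ with $b_1 + \dotsb + b_k = 1$ and $(N-1)b_1 \leq \sum_{j=2}^k b_j$. Then there exists a symmetric probability measure $P$ on $(\mathbb{R}^d)^N$, each of whose marginals equals $\rho = \sum_{j=1}^k b_j \delta_{x_j}$, such that $P$ gives zero mass to the diagonal set $\{(y_1,\dotsc,y_N) : \exists i \neq j,\ y_i = y_j\}$. -/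
/-!
Let `θ` be uniform on the circle `ℝ/ℤ`, cut into consecutive half-open arcs of lengths `b j`,
and let `f θ` be the index of the arc containing `θ`. The configuration `i ↦ x (f (θ + i / N))`
has every marginal equal to `ρ` by rotation invariance, and its points are pairwise distinct:
two of the points `θ + i / N` are at distance at least `1 / N` on the circle, whereas two points
of the arc of length `b j` are closer than `b j ≤ b 0 ≤ 1 / N`, the last inequality being the
hypothesis `(N - 1) b 0 ≤ 1 - b 0`. Averaging the law of this configuration over all
permutations of the coordinates makes it symmetric without changing the marginals or the mass
of the diagonal.
-/

open MeasureTheory Set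
open scoped ENNReal

theorem ENNReal.inv_card_smul_sum_const {T M : Type*} [Fintype T] [Nonempty T]
    [AddCommMonoid M] [Module ℝ≥0∞ M] (m : M) :
    (Fintype.card T : ℝ≥0∞)⁻¹ • ∑ _ : T, m = m := by
  rw [Finset.sum_const, Finset.card_univ, ← Nat.cast_smul_eq_nsmul ℝ≥0∞, smul_smul,
    ENNReal.inv_mul_cancel (by simp) (by simp), one_smul]

theorem measurable_comp_perm {ι α : Type*} [MeasurableSpace α] (σ : Equiv.Perm ι) :
    Measurable fun X : ι → α => X ∘ σ := by
  fun_prop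

namespace MeasureTheory.Measure

theorem map_comp_eq_sum_smul_dirac {Ω ι β : Type*} [MeasurableSpace Ω] [Fintype ι]
    [MeasurableSpace ι] [MeasurableSingletonClass ι] [MeasurableSpace β] (μ : Measure Ω)
    {f : Ω → ι} (hf : Measurable f) {x : ι → β} (hx : Measurable x) :
    μ.map (x ∘ f) = ∑ j, μ (f ⁻¹' {j}) • dirac (x j) := by
  rw [← map_map hx hf, map_eq_sum μ f hf, sum_fintype, map_finset_sum' hx.aemeasurable]
  simp_rw [Measure.map_smul, map_dirac' hx]

variable {ι α : Type*} [Fintype ι] [DecidableEq ι] [MeasurableSpace α]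

noncomputable def symmetrize (P : Measure (ι → α)) : Measure (ι → α) :=
  (Fintype.card (Equiv.Perm ι) : ℝ≥0∞)⁻¹ • ∑ σ : Equiv.Perm ι, P.map (· ∘ σ)

theorem map_comp_perm_symmetrize (P : Measure (ι → α)) (τ : Equiv.Perm ι) :
    (symmetrize P).map (· ∘ τ) = symmetrize P := by
  have hcomp (σ : Equiv.Perm ι) : ((P.map (· ∘ σ)).map (· ∘ τ)) = P.map (· ∘ ⇑(σ * τ)) := by
    rw [map_map (by fun_prop) (by fun_prop)]
    rfl
  rw [symmetrize, Measure.map_smul, map_finset_sum' (measurable_comp_perm τ).aemeasurable]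
  simp_rw [hcomp]
  congr 1
  exact Fintype.sum_equiv (Equiv.mulRight τ) _ _ fun _ => rfl

theorem symmetrize_apply_of_forall_preimage_eq (P : Measure (ι → α)) {s : Set (ι → α)}
    (hs : MeasurableSet s) (hinv : ∀ σ : Equiv.Perm ι, (· ∘ σ) ⁻¹' s = s) :
    symmetrize P s = P s := by
  simp_rw [symmetrize, smul_apply, finsetSum_apply, map_apply (measurable_comp_perm _) hs,
    hinv]
  exact ENNReal.inv_card_smul_sum_const _

instance isProbabilityMeasure_symmetrize (P : Measure (ι → α)) [IsProbabilityMeasure P] :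
    IsProbabilityMeasure (symmetrize P) :=
  ⟨by rw [symmetrize_apply_of_forall_preimage_eq P .univ (fun _ => rfl), measure_univ]⟩

theorem map_eval_symmetrize {P : Measure (ι → α)} {ρ : Measure α}
    (hP : ∀ i, P.map (fun X => X i) = ρ) (i : ι) :
    (symmetrize P).map (fun X => X i) = ρ := by
  have hcomp (σ : Equiv.Perm ι) : ((P.map (· ∘ σ)).map (fun X => X i)) = ρ := by
    rw [map_map (by fun_prop) (by fun_prop)]
    exact hP (σ i)
  rw [symmetrize, Measure.map_smul, map_finset_sum' (measurable_pi_apply i).aemeasurable]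
  simp_rw [hcomp]
  exact ENNReal.inv_card_smul_sum_const ρ

end MeasureTheory.Measure

theorem Equiv.Perm.preimage_comp_setOf_exists_ne_eq {ι α : Type*} (σ : Equiv.Perm ι) :
    (· ∘ σ) ⁻¹' {X : ι → α | ∃ i j, i ≠ j ∧ X i = X j} = {X | ∃ i j, i ≠ j ∧ X i = X j} := by
  ext X
  simp only [Set.mem_preimage, Set.mem_ofPred_eq, Function.comp_apply]
  constructor
  · rintro ⟨i, j, hij, hX⟩
    exact ⟨σ i, σ j, σ.injective.ne hij, hX⟩
  · rintro ⟨i, j, hij, hX⟩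
    exact ⟨σ.symm i, σ.symm j, σ.symm.injective.ne hij, by simpa using hX⟩

instance : IsProbabilityMeasure (volume : Measure UnitAddCircle) :=
  ⟨UnitAddCircle.measure_univ⟩

namespace UnitAddCircle

theorem exists_arc_index (w : ℕ → ℝ) (hw : ∀ n, 0 ≤ w n) {k : ℕ}
    (hsum : ∑ i ∈ Finset.range k, w i = 1) :
    ∃ f : UnitAddCircle → Fin k, Measurable f ∧ ∀ θ j, f θ = j ↔
      (AddCircle.equivIoc 1 0 θ : ℝ) ∈
        Ioc (∑ i ∈ Finset.range j, w i) (∑ i ∈ Finset.range (j + 1), w i) := by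
  set c : ℕ → ℝ := fun m => ∑ i ∈ Finset.range m, w i
  have hc : Monotone c :=
    monotone_nat_of_le_succ fun n => by simp [c, Finset.sum_range_succ, hw n]
  have hcover (θ : UnitAddCircle) :
      ∃ j : Fin k, (AddCircle.equivIoc 1 0 θ : ℝ) ∈ Ioc (c j) (c (j + 1)) := by
    have hmem : (AddCircle.equivIoc 1 0 θ : ℝ) ∈ Ioc (c 0) (c k) := by
      simpa [c, hsum] using (AddCircle.equivIoc 1 0 θ).2
    obtain ⟨j, hj, hθ⟩ := mem_iUnion₂.mp (Ioc_subset_biUnion_Ioc k c hmem)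
    exact ⟨⟨j, Finset.mem_range.mp hj⟩, hθ⟩
  choose f hf using hcover
  have hunique (θ : UnitAddCircle) (j : Fin k) :
      f θ = j ↔ (AddCircle.equivIoc 1 0 θ : ℝ) ∈ Ioc (c j) (c (j + 1)) := by
    refine ⟨fun h => h ▸ hf θ, fun hj => Fin.ext ?_⟩
    by_contra hne
    exact hc.pairwise_disjoint_on_Ioc_succ hne |>.le_bot ⟨hf θ, hj⟩
  refine ⟨f, measurable_to_countable' fun j => ?_, hunique⟩
  have hpre : f ⁻¹' {j} =
      (fun θ => (AddCircle.equivIoc 1 0 θ : ℝ)) ⁻¹' Ioc (c j) (c (j + 1)) := by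
    ext θ
    exact hunique θ j
  rw [hpre]
  exact measurable_subtype_coe.comp (AddCircle.measurableEquivIoc 1 0).measurable
    measurableSet_Ioc

theorem exists_partition_into_arcs {k : ℕ} (b : Fin k → ℝ) (hb : ∀ j, 0 ≤ b j)
    (hsum : ∑ j, b j = 1) :
    ∃ f : UnitAddCircle → Fin k, Measurable f ∧
      (∀ j, volume (f ⁻¹' {j}) = ENNReal.ofReal (b j)) ∧
      ∀ θ θ', f θ = f θ' →
        |(AddCircle.equivIoc 1 0 θ : ℝ) - AddCircle.equivIoc 1 0 θ'| < b (f θ) := by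
  set w : ℕ → ℝ := fun n => if h : n < k then b ⟨n, h⟩ else 0
  have hw (j : Fin k) : w j = b j := dif_pos j.2
  have hw_nonneg (n : ℕ) : 0 ≤ w n := by by_cases h : n < k <;> simp [w, h, hb]
  have hwsum : ∑ i ∈ Finset.range k, w i = 1 := by
    rw [← Fin.sum_univ_eq_sum_range]
    simpa only [hw] using hsum
  obtain ⟨f, hf, hfiber⟩ := exists_arc_index w hw_nonneg hwsum
  refine ⟨f, hf, fun j => ?_, fun θ θ' h => ?_⟩
  · have hsub : Ioc (∑ i ∈ Finset.range j, w i) (∑ i ∈ Finset.range (j + 1), w i) ⊆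
        Ioc 0 (0 + 1) := by
      refine Ioc_subset_Ioc (Finset.sum_nonneg fun i _ => hw_nonneg i) ?_
      rw [zero_add, ← hwsum]
      exact Finset.sum_le_sum_of_subset_of_nonneg (Finset.range_subset_range.mpr j.2)
        fun i _ _ => hw_nonneg i
    rw [AddCircle.add_projection_respects_measure 1 0 (hf (measurableSet_singleton j))]
    have hpre : QuotientAddGroup.mk ⁻¹' (f ⁻¹' {j}) ∩ Ioc 0 (0 + 1) =
        Ioc (∑ i ∈ Finset.range j, w i) (∑ i ∈ Finset.range (j + 1), w i) := by
      ext t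
      simp only [mem_inter_iff, mem_preimage, mem_singleton_iff]
      constructor
      · rintro ⟨ht, hI⟩
        simpa [AddCircle.equivIoc_coe_eq hI] using (hfiber t j).mp ht
      · intro ht
        refine ⟨(hfiber t j).mpr ?_, hsub ht⟩
        simpa [AddCircle.equivIoc_coe_eq (hsub ht)] using ht
    rw [hpre, Real.volume_Ioc, Finset.sum_range_succ, add_sub_cancel_left, hw]
  · have h1 := (hfiber θ (f θ)).mp rfl
    have h2 := (hfiber θ' (f θ)).mp h.symm
    rw [Finset.sum_range_succ, hw] at h1 h2
    rw [abs_sub_lt_iff]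
    constructor <;> linarith [h1.1, h1.2, h2.1, h2.2]

theorem one_le_mul_abs_sub {N : ℕ} {i j : Fin N} (hij : i ≠ j)
    {θ : UnitAddCircle} {u v : ℝ} (hu : (u : UnitAddCircle) = θ + ((i / N : ℝ) : UnitAddCircle))
    (hv : (v : UnitAddCircle) = θ + ((j / N : ℝ) : UnitAddCircle)) :
    1 ≤ N * |u - v| := by
  -- `u - v ≡ (i - j) / N` mod 1, so `N * (u - v)` is an integer, nonzero as `N ∤ i - j`.
  have hNpos : (0 : ℝ) < N := by exact_mod_cast i.pos
  have hzero : ((u - v - (i - j) / N : ℝ) : UnitAddCircle) = 0 := by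
    rw [sub_div, AddCircle.coe_sub, AddCircle.coe_sub, AddCircle.coe_sub, hu, hv]
    abel
  obtain ⟨n, hn⟩ := (AddCircle.coe_eq_zero_iff 1).mp hzero
  have hcast : (((i : ℤ) - j + n * N : ℤ) : ℝ) = N * (u - v) := by
    simp only [zsmul_eq_mul, mul_one] at hn
    push_cast
    field_simp at hn
    linarith
  have hne : (i : ℤ) - j + n * N ≠ 0 := by
    intro h
    have hdvd : (N : ℤ) ∣ (i : ℤ) - j := ⟨-n, by linarith⟩
    have hlt : |(i : ℤ) - j| < N := abs_sub_lt_iff.mpr ⟨by omega, by omega⟩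
    exact hij (Fin.ext (by have := Int.eq_zero_of_abs_lt_dvd hdvd hlt; omega))
  rw [← abs_of_pos hNpos, ← abs_mul, ← hcast]
  exact_mod_cast Int.one_le_abs hne

end UnitAddCircle

theorem exists_finite_cost_plan_atomic
    {d N k : ℕ} (hk : N < k)
    (x : Fin k → EuclideanSpace ℝ (Fin d)) (hx : Function.Injective x)
    (b : Fin k → ℝ)
    (hpos : ∀ j, 0 < b j)
    (hmono : ∀ i j : Fin k, i ≤ j → b j ≤ b i)
    (hsum : ∑ j, b j = 1)
    (hmain : ((N : ℝ) - 1) * b ⟨0, by omega⟩ ≤ ∑ j ∈ Finset.univ \ {(⟨0, by omega⟩ : Fin k)}, b j) :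
    ∃ P : Measure (Fin N → EuclideanSpace ℝ (Fin d)),
      IsProbabilityMeasure P ∧
      (∀ s : Equiv.Perm (Fin N), Measure.map (fun X => X ∘ s) P = P) ∧
      (∀ i : Fin N, Measure.map (fun X => X i) P =
        ∑ j : Fin k, ENNReal.ofReal (b j) • Measure.dirac (x j)) ∧
      P {X | ∃ i j : Fin N, i ≠ j ∧ X i = X j} = 0 := by
  have hb_le (j : Fin k) : b j * N ≤ 1 := by
    rw [Finset.sum_sdiff_eq_sub (Finset.subset_univ _), hsum, Finset.sum_singleton] at hmain
    have := hmono ⟨0, by omega⟩ j (Fin.mk_le_mk.mpr (Nat.zero_le j))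
    nlinarith
  obtain ⟨f, hf, hvol, harc⟩ :=
    UnitAddCircle.exists_partition_into_arcs b (fun j => (hpos j).le) hsum
  set G : UnitAddCircle → Fin N → EuclideanSpace ℝ (Fin d) :=
    fun θ i => x (f (θ + ((i / N : ℝ) : UnitAddCircle)))
  have hG : Measurable G := measurable_pi_lambda _ fun i =>
    (measurable_from_top.comp hf).comp (measurable_add_const _)
  have hmarg (i : Fin N) : (volume.map G).map (fun X => X i) =
      ∑ j, ENNReal.ofReal (b j) • Measure.dirac (x j) := by
    rw [Measure.map_map (measurable_pi_apply i) hG]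
    change Measure.map ((x ∘ f) ∘ (· + ((i / N : ℝ) : UnitAddCircle))) volume = _
    rw [← Measure.map_map (measurable_from_top.comp hf) (measurable_add_const _),
      map_add_right_eq_self, Measure.map_comp_eq_sum_smul_dirac volume hf measurable_from_top]
    simp_rw [hvol]
  have hinj (θ : UnitAddCircle) : Function.Injective (G θ) := by
    intro i j hij
    by_contra hne
    have hNpos : (0 : ℝ) < N := by exact_mod_cast i.pos
    have hsep := UnitAddCircle.one_le_mul_abs_sub hne (θ := θ)
      (AddCircle.coe_equivIoc (a := 0)) (AddCircle.coe_equivIoc (a := 0))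
    nlinarith [harc _ _ (hx hij), hb_le (f (θ + ((i / N : ℝ) : UnitAddCircle)))]
  have hD :
      MeasurableSet {X : Fin N → EuclideanSpace ℝ (Fin d) | ∃ i j, i ≠ j ∧ X i = X j} := by
    measurability
  have : IsProbabilityMeasure (volume.map G) := Measure.isProbabilityMeasure_map hG.aemeasurable
  refine ⟨(volume.map G).symmetrize, inferInstance, Measure.map_comp_perm_symmetrize _,
    Measure.map_eval_symmetrize hmarg, ?_⟩
  rw [Measure.symmetrize_apply_of_forall_preimage_eq _ hD
    Equiv.Perm.preimage_comp_setOf_exists_ne_eq, Measure.map_apply hG hD]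
  convert measure_empty (μ := volume)
  exact eq_empty_of_forall_notMem fun θ ⟨i, j, hne, hij⟩ => hne (hinj θ hij)
end

section
/- Let $N \geq 2$ and let $\rho$ be a non-atomic probability measure on $\mathbb{R}^d$. Let $c(x_1,\dotsc,x_N) = \sum_{1 \leq i < j \leq N} \frac{1}{\omega(|x_i - x_j|)}$ where $\omega:[0,\infty)\to[0,\infty)$ is continuous, strictly increasing with $\omega(0) = 0$. Then there exists a probability measure $P$ on $(\mathbb{R}^d)^N$ with all marginals equal to $\rho$ and $\int c \, dP < \infty$. -/
/-!
Almost every direction `e` projects `ρ` to an atomless law on `ℝ`: by Fubini, it suffices that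
for every `v ≠ 0` the directions orthogonal to `v` form a Haar-null hyperplane. Cutting `ℝ` at the
quantiles `k / n` of that law, with `n = 2N + 2`, splits `ρ` into `n` slabs of mass `1 / n`, and
slabs whose indices differ by at least two are a positive distance `δ` apart. For a shift `τ`,
draw particle `i` independently from `ρ` conditioned on slab `τ + 2i (mod n)`, then average over
`τ`: each marginal is `ρ`, and two particles always occupy distinct slabs of the same parity, so
they are at distance at least `δ` and the cost is bounded by `N² / ω δ`.
-/

open MeasureTheory
open scoped ENNReal

open ProbabilityTheory Set Filter Topology
open scoped RealInnerProductSpace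

section Projection

theorem ae_prod_fst_ne_snd {α : Type*} [MeasurableSpace α] [MeasurableEq α] (ρ : Measure α)
    [SFinite ρ] [NullSingletonClass ρ] : ∀ᵐ p ∂ρ.prod ρ, p.1 ≠ p.2 :=
  (Measure.ae_prod_iff_ae_ae measurableSet_diagonal.compl).2 <|
    Eventually.of_forall fun x => (ρ.ae_ne x).mono fun _ h => h.symm

variable {E : Type*} [NormedAddCommGroup E] [InnerProductSpace ℝ E] [FiniteDimensional ℝ E]
  [MeasurableSpace E] [BorelSpace E]

theorem exists_nullSingletonClass_map_inner (ρ : Measure E) [SFinite ρ] [NullSingletonClass ρ] :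
    ∃ e : E, NullSingletonClass (ρ.map fun x => ⟪e, x⟫) := by
  have h_hyperplane (v : E) (hv : v ≠ 0) : ∀ᵐ u ∂(Measure.addHaar : Measure E), ⟪u, v⟫ ≠ 0 := by
    refine measure_mono_null (fun u hu => ?_) (Measure.addHaar_submodule _ (ℝ ∙ v)ᗮ fun h => hv ?_)
    · simpa [Submodule.mem_orthogonal_singleton_iff_inner_left] using hu
    · simpa using (Submodule.mem_orthogonal_singleton_iff_inner_right.1
        (Submodule.eq_top_iff'.1 h v))
  have h_sep : ∀ᵐ u ∂(Measure.addHaar : Measure E),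
      ∀ᵐ p ∂ρ.prod ρ, ⟪u, p.1 - p.2⟫ = 0 → p.1 = p.2 := by
    rw [Measure.ae_ae_comm]
    · refine Eventually.of_forall fun p => ?_
      by_cases hp : p.1 = p.2
      · exact Eventually.of_forall fun _ _ => hp
      · exact (h_hyperplane _ (sub_ne_zero.2 hp)).mono fun u hu h => absurd h hu
    · simp only [imp_iff_not_or]
      exact (measurableSet_eq_fun (by fun_prop) measurable_const).compl.union
        (measurableSet_eq_fun (by fun_prop) (by fun_prop))
  obtain ⟨u, hu⟩ := h_sep.exists
  refine ⟨u, ⟨fun c => ?_⟩⟩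
  rw [Measure.map_apply (by fun_prop) (measurableSet_singleton c)]
  have h_null : ρ.prod ρ (((fun x => ⟪u, x⟫) ⁻¹' {c}) ×ˢ ((fun x => ⟪u, x⟫) ⁻¹' {c})) = 0 := by
    refine measure_eq_zero_iff_ae_notMem.2 ((hu.and (ae_prod_fst_ne_snd ρ)).mono ?_)
    rintro p ⟨hp, hne⟩ ⟨h₁, h₂⟩
    simp only [mem_preimage, mem_singleton_iff] at h₁ h₂
    exact hne (hp (by rw [inner_sub_right, h₁, h₂, sub_self]))
  rwa [Measure.prod_prod, mul_self_eq_zero] at h_null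

end Projection

theorem exists_pos_forall_le_of_finset {ι : Type*} (s : Finset ι) (c : ι → ℝ)
    (hc : ∀ i ∈ s, 0 < c i) : ∃ g, 0 < g ∧ ∀ i ∈ s, g ≤ c i := by
  have h : ∀ᶠ g in 𝓝[>] (0 : ℝ), ∀ i ∈ s, g ≤ c i :=
    (eventually_all_finset s).2 fun i hi => nhdsWithin_le_nhds (eventually_le_nhds (hc i hi))
  obtain ⟨g, hg, hg0⟩ := (h.and self_mem_nhdsWithin).exists
  exact ⟨g, hg0, hg⟩

theorem measure_preimage_singleton_eq_inv_of_measure_lt {α : Type*} [MeasurableSpace α]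
    {n : ℕ} (ρ : Measure α) [IsFiniteMeasure ρ] {κ : α → Fin n} (hκ : Measurable κ)
    (h : ∀ k ≤ n, ρ {x | (κ x : ℕ) < k} = ENNReal.ofReal (k / n)) (k : Fin n) :
    ρ (κ ⁻¹' {k}) = (n : ℝ≥0∞)⁻¹ := by
  have h_diff : κ ⁻¹' {k} = {x | (κ x : ℕ) < k + 1} \ {x | (κ x : ℕ) < k} := by
    ext x
    simp only [mem_preimage, mem_singleton_iff, Set.mem_sdiff, mem_ofPred_eq, Fin.ext_iff]
    omega
  have hn : (0 : ℝ) < n := by exact_mod_cast k.pos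
  have h_sub : {x | (κ x : ℕ) < k} ⊆ {x | (κ x : ℕ) < k + 1} := fun x (hx : (κ x : ℕ) < k) =>
    show (κ x : ℕ) < k + 1 by omega
  rw [h_diff, measure_sdiff h_sub
      (hκ (MeasurableSet.of_discrete (s := {i : Fin n | (i : ℕ) < k}))).nullMeasurableSet
      (measure_ne_top _ _), h _ k.2, h _ k.2.le, ← ENNReal.ofReal_sub _ (by positivity),
    show ((k + 1 : ℕ) : ℝ) / n - (k : ℕ) / n = (n : ℝ)⁻¹ by push_cast; field_simp; ring,
    ENNReal.ofReal_inv_of_pos hn, ENNReal.ofReal_natCast]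

section Line

variable (μ : Measure ℝ) [IsProbabilityMeasure μ] [NullSingletonClass μ]

theorem continuous_cdf : Continuous (cdf μ) := by
  refine continuous_iff_continuousAt.2 fun x => continuousAt_iff_continuous_left'_right'.2
    ⟨?_, ((cdf μ).right_continuous x).mono Ioi_subset_Ici_self⟩
  rw [(monotone_cdf μ).continuousWithinAt_Iio_iff_leftLim_eq]
  have h_atom : (cdf μ).measure {x} = 0 := by rw [measure_cdf]; exact measure_singleton x
  rw [StieltjesFunction.measure_singleton, ENNReal.ofReal_eq_zero] at h_atom
  linarith [(monotone_cdf μ).leftLim_le (le_refl x)]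

theorem exists_cdf_le_iff_le {b : ℝ} (hb0 : 0 < b) (hb1 : b < 1) :
    ∃ m, (∀ t, cdf μ t ≤ b ↔ t ≤ m) ∧ cdf μ m = b := by
  set S := {t | cdf μ t ≤ b}
  obtain ⟨M, hM⟩ := eventually_atTop.1 ((tendsto_cdf_atTop μ).eventually_const_lt hb1)
  have h_bdd : BddAbove S := ⟨M, fun t ht => le_of_not_gt fun h => (hM t h.le).not_ge ht⟩
  have h_ne : S.Nonempty := ((tendsto_cdf_atBot μ).eventually_lt_const hb0).exists.imp
    fun _ h => h.le
  have h_mem : sSup S ∈ S :=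
    (isClosed_le (continuous_cdf μ) continuous_const).csSup_mem h_ne h_bdd
  have h_iff (t : ℝ) : cdf μ t ≤ b ↔ t ≤ sSup S :=
    ⟨fun ht => le_csSup h_bdd ht, fun ht => ((monotone_cdf μ) ht).trans h_mem⟩
  refine ⟨sSup S, h_iff, le_antisymm h_mem (ge_of_tendsto
    ((continuous_cdf μ).continuousAt.tendsto.mono_left (nhdsWithin_le_nhds (s := Ioi (sSup S))))
    (eventually_nhdsWithin_of_forall fun t ht => ?_))⟩
  exact (lt_of_not_ge fun h => (mem_Ioi.1 ht).not_ge ((h_iff t).1 h)).le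

theorem measure_cdf_le {b : ℝ} (hb0 : 0 < b) (hb1 : b ≤ 1) :
    μ {t | cdf μ t ≤ b} = ENNReal.ofReal b := by
  rcases hb1.lt_or_eq with hb1 | rfl
  · obtain ⟨m, hm, hmb⟩ := exists_cdf_le_iff_le μ hb0 hb1
    rw [show {t | cdf μ t ≤ b} = Iic m from Set.ext hm, ← ofReal_cdf, hmb]
  · simp [cdf_le_one]

end Line

section Cells

variable (μ : Measure ℝ)

/-- The cell of `t` when `ℝ` is cut where `cdf μ` crosses the levels `k / n`. -/
noncomputable def cdfCell (n : ℕ) [NeZero n] (t : ℝ) : Fin n :=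
  Fin.ofNat n (⌈n * cdf μ t⌉₊ - 1)

variable {n : ℕ} [NeZero n]

theorem measurable_cdfCell : Measurable (cdfCell μ n) :=
  (measurable_from_nat (f := fun m : ℕ => Fin.ofNat n (m - 1))).comp
    (Nat.measurable_ceil.comp (measurable_const.mul (monotone_cdf μ).measurable))

theorem cdfCell_lt_iff {k : ℕ} (hk : 1 ≤ k) (t : ℝ) :
    (cdfCell μ n t : ℕ) < k ↔ cdf μ t ≤ k / n := by
  have hn := NeZero.pos n
  have h_ceil : ⌈n * cdf μ t⌉₊ ≤ n :=
    Nat.ceil_le.2 (mul_le_of_le_one_right (Nat.cast_nonneg n) (cdf_le_one μ t))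
  rw [cdfCell, Fin.val_ofNat, Nat.mod_eq_of_lt (by omega), le_div_iff₀ (by exact_mod_cast hn),
    mul_comm, ← Nat.ceil_le]
  omega

end Cells

structure IsSeparatedEquipartition {α : Type*} [MeasurableSpace α] [PseudoMetricSpace α] {n : ℕ}
    (ρ : Measure α) (κ : α → Fin n) (δ : ℝ) : Prop where
  measurable : Measurable κ
  measure_preimage_singleton (k : Fin n) : ρ (κ ⁻¹' {k}) = (n : ℝ≥0∞)⁻¹
  le_dist (x y : α) : (κ x : ℕ) + 2 ≤ κ y → δ ≤ dist x y

theorem exists_isSeparatedEquipartition_cdfCell (μ : Measure ℝ) [IsProbabilityMeasure μ]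
    [NullSingletonClass μ] (n : ℕ) [NeZero n] :
    ∃ g, 0 < g ∧ IsSeparatedEquipartition μ (cdfCell μ n) g := by
  have hn : (0 : ℝ) < n := by exact_mod_cast NeZero.pos n
  have h_level {j : ℕ} (h1 : 1 ≤ j) (h2 : j < n) : (j / n : ℝ) ∈ Ioo 0 1 :=
    ⟨by positivity, (div_lt_one hn).2 (by exact_mod_cast h2)⟩
  choose! q hq hq_cdf using fun b (hb : b ∈ Ioo (0 : ℝ) 1) => exists_cdf_le_iff_le μ hb.1 hb.2
  obtain ⟨g, hg, hgq⟩ := exists_pos_forall_le_of_finset (Finset.range (n - 2))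
    (fun a => q ((a + 2 : ℕ) / n) - q ((a + 1 : ℕ) / n)) fun a ha => by
      have ha : a + 2 < n := by rw [Finset.mem_range] at ha; omega
      refine sub_pos.2 ((monotone_cdf μ).reflect_lt ?_)
      rw [hq_cdf _ (h_level (by omega) (by omega)), hq_cdf _ (h_level (by omega) ha)]
      gcongr
      omega
  refine ⟨g, hg, ⟨measurable_cdfCell μ, ?_, fun x y hxy => ?_⟩⟩
  · refine measure_preimage_singleton_eq_inv_of_measure_lt μ (measurable_cdfCell μ)
      fun k hk => ?_
    rcases Nat.eq_zero_or_pos k with rfl | hk0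
    · simp
    · simp_rw [cdfCell_lt_iff μ hk0]
      exact measure_cdf_le μ (by positivity) ((div_le_one hn).2 (by exact_mod_cast hk))
  · set a := (cdfCell μ n x : ℕ)
    have ha : a + 2 < n := by have := (cdfCell μ n y).2; omega
    have hx : x ≤ q ((a + 1 : ℕ) / n) :=
      (hq _ (h_level (by omega) (by omega)) x).1 ((cdfCell_lt_iff μ (by omega) x).1 (by omega))
    have hy : q ((a + 2 : ℕ) / n) < y := lt_of_not_ge fun h =>
      (not_lt.2 hxy) ((cdfCell_lt_iff μ (by omega) y).2 ((hq _ (h_level (by omega) ha) y).2 h))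
    have := hgq a (Finset.mem_range.2 (by omega))
    rw [Real.dist_eq, abs_sub_comm]
    exact (by linarith : g ≤ y - x).trans (le_abs_self _)

theorem IsSeparatedEquipartition.comp {α β : Type*} [MeasurableSpace α] [PseudoMetricSpace α]
    [MeasurableSpace β] [PseudoMetricSpace β] {n : ℕ} {ρ : Measure α} {κ : β → Fin n} {g K : ℝ}
    {f : α → β} (hκ : IsSeparatedEquipartition (ρ.map f) κ g) (hf : Measurable f) (hK : 0 < K)
    (hf_lip : ∀ x y, dist (f x) (f y) ≤ K * dist x y) :
    IsSeparatedEquipartition ρ (κ ∘ f) (g / K) where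
  measurable := hκ.measurable.comp hf
  measure_preimage_singleton k := by
    rw [← hκ.measure_preimage_singleton k,
      Measure.map_apply hf (hκ.measurable (measurableSet_singleton k)), preimage_comp]
  le_dist x y h := (div_le_iff₀' hK).2 ((hκ.le_dist _ _ h).trans (hf_lip x y))

theorem exists_isSeparatedEquipartition {E : Type*} [NormedAddCommGroup E]
    [InnerProductSpace ℝ E] [FiniteDimensional ℝ E] [MeasurableSpace E] [BorelSpace E]
    (ρ : Measure E) [IsProbabilityMeasure ρ] [NullSingletonClass ρ] (n : ℕ) [NeZero n] :
    ∃ (κ : E → Fin n) (δ : ℝ), 0 < δ ∧ IsSeparatedEquipartition ρ κ δ := by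
  obtain ⟨e, he⟩ := exists_nullSingletonClass_map_inner ρ
  have he0 : e ≠ 0 := by
    rintro rfl
    simpa [Measure.map_const] using he.measure_singleton 0
  have : IsProbabilityMeasure (ρ.map fun x => ⟪e, x⟫) :=
    Measure.isProbabilityMeasure_map (by fun_prop)
  obtain ⟨g, hg, hκ⟩ := exists_isSeparatedEquipartition_cdfCell (ρ.map fun x => ⟪e, x⟫) n
  refine ⟨_, g / ‖e‖, by positivity, hκ.comp (by fun_prop) (norm_pos_iff.2 he0) fun x y => ?_⟩
  rw [Real.dist_eq, ← inner_sub_right, dist_eq_norm]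
  exact abs_real_inner_le_norm _ _

section CyclicPlan

variable {α : Type*} [MeasurableSpace α] {n N : ℕ} (ρ : Measure α) (κ : α → Fin n)
  (r : Fin N → Fin n)

noncomputable def cyclicPlan : Measure (Fin N → α) :=
  (n : ℝ≥0∞)⁻¹ • ∑ τ : Fin n, Measure.pi fun i => ρ[|κ ← τ + r i]

variable {κ}

theorem ae_cyclicPlan (hκm : Measurable κ) :
    ∀ᵐ X ∂cyclicPlan ρ κ r, ∃ τ, ∀ i, κ (X i) = τ + r i := by
  refine Measure.ae_smul_measure ?_ _
  rw [← Measure.sum_fintype, Measure.ae_sum_iff]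
  exact fun τ => (eventually_all.2 fun i => (Measure.quasiMeasurePreserving_eval _ i).ae
    (ae_cond_mem (hκm (measurableSet_singleton _)))).mono fun X hX => ⟨τ, hX⟩

variable [IsFiniteMeasure ρ] (hκ : ∀ k, ρ (κ ⁻¹' {k}) = (n : ℝ≥0∞)⁻¹)
include hκ

theorem isProbabilityMeasure_cond_preimage_singleton (k : Fin n) :
    IsProbabilityMeasure ρ[|κ ← k] :=
  cond_isProbabilityMeasure (by simp [hκ])

theorem isProbabilityMeasure_cyclicPlan [NeZero n] : IsProbabilityMeasure (cyclicPlan ρ κ r) := by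
  have := isProbabilityMeasure_cond_preimage_singleton ρ hκ
  constructor
  simpa [cyclicPlan] using
    ENNReal.inv_mul_cancel (NeZero.ne (n : ℝ≥0∞)) (ENNReal.natCast_ne_top n)

theorem map_eval_cyclicPlan [NeZero n] (hκm : Measurable κ) (i : Fin N) :
    (cyclicPlan ρ κ r).map (fun X => X i) = ρ := by
  have := isProbabilityMeasure_cond_preimage_singleton ρ hκ
  rw [cyclicPlan, Measure.map_smul, Measure.map_finset_sum (measurable_pi_apply i).aemeasurable]
  simp_rw [fun τ : Fin n => (measurePreserving_eval (fun j => ρ[|κ ← τ + r j]) i).map_eq]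
  rw [show ∑ τ, ρ[|κ ← τ + r i] = ∑ k, ρ[|κ ← k] from
    Equiv.sum_comp (Equiv.addRight (r i)) fun k => ρ[|κ ← k]]
  conv_rhs => rw [← sum_meas_smul_cond_fiber hκm ρ]
  simp [hκ, Finset.smul_sum]

end CyclicPlan

def evenSlot (N : ℕ) (i : Fin N) : Fin (2 * N + 2) := ⟨2 * i, by omega⟩

theorem add_evenSlot_add_two_le {N : ℕ} (τ : Fin (2 * N + 2)) {i j : Fin N} (hij : i ≠ j) :
    ((τ + evenSlot N i : Fin _) : ℕ) + 2 ≤ (τ + evenSlot N j : Fin _) ∨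
      ((τ + evenSlot N j : Fin _) : ℕ) + 2 ≤ (τ + evenSlot N i : Fin _) := by
  have h_ne : τ + evenSlot N i ≠ τ + evenSlot N j := fun h =>
    hij (Fin.ext (by simpa [evenSlot, Fin.ext_iff] using add_left_cancel h))
  have h_parity (k : Fin N) : ((τ + evenSlot N k : Fin _) : ℕ) % 2 = τ % 2 := by
    rw [Fin.val_add, Nat.mod_mod_of_dvd _ ⟨N + 1, by ring⟩]
    simp only [evenSlot]
    omega
  have := h_parity i
  have := h_parity j
  have := Fin.val_ne_of_ne h_ne
  omega

theorem exists_finite_cost_plan_nonatomic_general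
    {d N : ℕ}
    (ρ : Measure (EuclideanSpace ℝ (Fin d))) [IsProbabilityMeasure ρ] [NullSingletonClass ρ]
    (ω : ℝ → ℝ)
    (hω_mono : StrictMonoOn ω (Set.Ici 0))
    (hω0 : ω 0 = 0) :
    ∃ P : Measure (Fin N → EuclideanSpace ℝ (Fin d)),
      IsProbabilityMeasure P ∧
      (∀ i : Fin N, Measure.map (fun X => X i) P = ρ) ∧
      ∫⁻ X, (∑ p ∈ Finset.univ.filter (fun p : Fin N × Fin N => p.1 < p.2),
        (ENNReal.ofReal (ω (dist (X p.1) (X p.2))))⁻¹) ∂P < ⊤ := by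
  obtain ⟨κ, δ, hδ, hκ⟩ := exists_isSeparatedEquipartition ρ (2 * N + 2)
  have hP := isProbabilityMeasure_cyclicPlan ρ (evenSlot N) hκ.measure_preimage_singleton
  refine ⟨cyclicPlan ρ κ (evenSlot N), hP,
    map_eval_cyclicPlan ρ (evenSlot N) hκ.measure_preimage_singleton hκ.measurable, ?_⟩
  have h_far : ∀ᵐ X ∂cyclicPlan ρ κ (evenSlot N), ∀ i j, i ≠ j → δ ≤ dist (X i) (X j) := by
    filter_upwards [ae_cyclicPlan ρ (evenSlot N) hκ.measurable] with X ⟨τ, hτ⟩ i j hij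
    rcases add_evenSlot_add_two_le τ hij with h | h
    · exact hκ.le_dist _ _ (by rwa [hτ, hτ])
    · exact dist_comm (X i) (X j) ▸ hκ.le_dist _ _ (by rwa [hτ, hτ])
  have h_cost {t : ℝ} (ht : δ ≤ t) : (ENNReal.ofReal (ω t))⁻¹ ≤ (ENNReal.ofReal (ω δ))⁻¹ :=
    ENNReal.inv_le_inv.2 (ENNReal.ofReal_le_ofReal (hω_mono.monotoneOn hδ.le (hδ.le.trans ht) ht))
  have hωδ : 0 < ω δ := hω0 ▸ hω_mono (mem_Ici.2 le_rfl) hδ.le hδ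
  refine (lintegral_mono_ae (h_far.mono fun X hX => Finset.sum_le_sum fun p hp =>
    h_cost (hX _ _ (Finset.mem_filter.1 hp).2.ne))).trans_lt ?_
  rw [lintegral_const, measure_univ, mul_one]
  exact ENNReal.sum_lt_top.2 fun _ _ => ENNReal.inv_lt_top.2 (ENNReal.ofReal_pos.2 hωδ)

theorem exists_finite_cost_plan_nonatomic
    {d N : ℕ} (hN : 2 ≤ N)
    (ρ : Measure (EuclideanSpace ℝ (Fin d))) [IsProbabilityMeasure ρ] [NullSingletonClass ρ]
    (ω : ℝ → ℝ)
    (hω_cont : ContinuousOn ω (Set.Ici 0))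
    (hω_mono : StrictMonoOn ω (Set.Ici 0))
    (hω0 : ω 0 = 0) :
    ∃ P : Measure (Fin N → EuclideanSpace ℝ (Fin d)),
      IsProbabilityMeasure P ∧
      (∀ i : Fin N, Measure.map (fun X => X i) P = ρ) ∧
      ∫⁻ X, (∑ p ∈ Finset.univ.filter (fun p : Fin N × Fin N => p.1 < p.2),
        (ENNReal.ofReal (ω (dist (X p.1) (X p.2))))⁻¹) ∂P < ⊤ :=
  exists_finite_cost_plan_nonatomic_general ρ ω hω_mono hω0
end

section
/- Let $x_2, \dotsc, x_{N+1}$ be distinct points of $\mathbb{R}^d$ and suppose countably many further points $x_i$ ($i \geq N+2$) are given. Then there exists a partition $\mathbb{R}^d = E_2 \sqcup \dotsb \sqcup E_{N+1}$ into Borel sets such that for each $j = 2, \dotsc, N+1$, $x_j$ lies in the interior of $E_j$, and no point $x_i$ ($i \geq 2$) lies on the boundary $\partial E_j$ of any $E_j$. -/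
/-!
Take balls of a common radius `r` around the points `x_j`, with `r` small enough that the balls
are disjoint, and attach everything outside the balls to one of them. Every frontier then lies in
the union of the spheres of radius `r` about the `x_j`, so it suffices to pick `r` outside the
countable set of distances `dist x_i x_j`, which is possible because that set has dense complement.
-/

open Set Filter Metric Function Topology

namespace Set

variable {X ι : Type*} [DecidableEq ι]

def completeToPartition (U : ι → Set X) (j₀ : ι) : ι → Set X :=
  update U j₀ (U j₀ ∪ (⋃ k, U k)ᶜ)

variable (U : ι → Set X) (j₀ : ι)

@[simp]
theorem completeToPartition_self : completeToPartition U j₀ j₀ = U j₀ ∪ (⋃ k, U k)ᶜ :=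
  update_self ..

@[simp]
theorem completeToPartition_of_ne {j : ι} (hj : j ≠ j₀) : completeToPartition U j₀ j = U j :=
  update_of_ne hj ..

theorem subset_completeToPartition (j : ι) : U j ⊆ completeToPartition U j₀ j := by
  rcases eq_or_ne j j₀ with rfl | hj
  · simp
  · simp [hj]

theorem iUnion_completeToPartition : ⋃ j, completeToPartition U j₀ j = univ := by
  refine eq_univ_of_forall fun p => ?_
  by_cases hp : p ∈ ⋃ k, U k
  · obtain ⟨k, hk⟩ := mem_iUnion.1 hp
    exact mem_iUnion.2 ⟨k, subset_completeToPartition U j₀ k hk⟩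
  · exact mem_iUnion.2 ⟨j₀, by simpa using Or.inr hp⟩

theorem pairwise_disjoint_completeToPartition (hU : Pairwise (Disjoint on U)) :
    Pairwise (Disjoint on completeToPartition U j₀) := by
  have key : ∀ j, j ≠ j₀ → Disjoint (U j₀ ∪ (⋃ k, U k)ᶜ) (U j) := fun j hj =>
    disjoint_union_left.2 ⟨hU hj.symm, disjoint_compl_left.mono_right (subset_iUnion U j)⟩
  intro i j hij
  rcases eq_or_ne i j₀ with rfl | hi
  · simpa only [onFun, completeToPartition_self, completeToPartition_of_ne U i hij.symm]
      using key j hij.symm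
  rcases eq_or_ne j j₀ with rfl | hj
  · simpa only [onFun, completeToPartition_self, completeToPartition_of_ne U j hi]
      using (key i hi).symm
  · simpa only [onFun, completeToPartition_of_ne U j₀ hi, completeToPartition_of_ne U j₀ hj]
      using hU hij

theorem measurableSet_completeToPartition [MeasurableSpace X] [Countable ι]
    (hU : ∀ k, MeasurableSet (U k)) (j : ι) : MeasurableSet (completeToPartition U j₀ j) := by
  rcases eq_or_ne j j₀ with rfl | hj
  · simpa only [completeToPartition_self] using (hU j).union (MeasurableSet.iUnion hU).compl
  · simpa only [completeToPartition_of_ne U j₀ hj] using hU j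

theorem frontier_iUnion_subset_of_finite [TopologicalSpace X] {κ : Sort*} [Finite κ]
    (f : κ → Set X) : frontier (⋃ i, f i) ⊆ ⋃ i, frontier (f i) := by
  intro p ⟨hcl, hint⟩
  obtain ⟨i, hi⟩ := mem_iUnion.1 ((closure_iUnion_of_finite f).subset hcl)
  exact mem_iUnion.2 ⟨i, hi, fun h => hint (interior_mono (subset_iUnion f i) h)⟩

theorem frontier_completeToPartition_subset [TopologicalSpace X] [Finite ι] (j : ι) :
    frontier (completeToPartition U j₀ j) ⊆ ⋃ k, frontier (U k) := by
  rcases eq_or_ne j j₀ with rfl | hj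
  · rw [completeToPartition_self]
    refine (frontier_union_subset _ _).trans (union_subset ?_ ?_)
    · exact inter_subset_left.trans (subset_iUnion (frontier ∘ U) j)
    · exact inter_subset_right.trans ((frontier_compl _).subset.trans
        (frontier_iUnion_subset_of_finite U))
  · rw [completeToPartition_of_ne U j₀ hj]
    exact subset_iUnion (frontier ∘ U) j

end Set

theorem exists_radius_pairwise_disjoint_balls_notMem {X ι : Type*} [MetricSpace X] [Finite ι]
    {c : ι → X} (hc : Pairwise fun i j => c i ≠ c j) {S : Set ℝ} (hS : S.Countable) :
    ∃ r, 0 < r ∧ r ∉ S ∧ Pairwise (Disjoint on fun k => ball (c k) r) := by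
  have hpair : ∀ i j, ∀ᶠ r in 𝓝[>] (0 : ℝ), i ≠ j → Disjoint (ball (c i) r) (ball (c j) r) := by
    intro i j
    rcases eq_or_ne i j with rfl | hij
    · exact Eventually.of_forall fun _ h => absurd rfl h
    have hpos : 0 < dist (c i) (c j) / 2 := half_pos (dist_pos.2 (hc hij))
    filter_upwards [nhdsWithin_le_nhds (eventually_lt_nhds hpos)] with r hr _
    exact ball_disjoint_ball (by linarith)
  obtain ⟨ε, hε, hsub⟩ := mem_nhdsGT_iff_exists_Ioo_subset.1
    (eventually_all.2 fun i => eventually_all.2 (hpair i))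
  obtain ⟨r, hrS, hr⟩ := (hS.dense_compl ℝ).exists_between hε
  exact ⟨r, hr.1, hrS, fun i j => hsub hr i j⟩

theorem exists_partition_separating_atoms
    {d N : ℕ} (hN : 1 ≤ N) (x : ℕ → EuclideanSpace ℝ (Fin d))
    (hx : ∀ i ∈ Set.Icc 2 (N + 1), ∀ j ∈ Set.Icc 2 (N + 1), i ≠ j → x i ≠ x j) :
    ∃ E : Fin N → Set (EuclideanSpace ℝ (Fin d)),
      (∀ j, MeasurableSet (E j)) ∧
      Pairwise (fun i j => Disjoint (E i) (E j)) ∧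
      (⋃ j, E j) = Set.univ ∧
      (∀ j : Fin N, x (j.val + 2) ∈ interior (E j)) ∧
      (∀ i : ℕ, 2 ≤ i → ∀ j : Fin N, x i ∉ frontier (E j)) := by
  let c : Fin N → EuclideanSpace ℝ (Fin d) := fun j => x (j.val + 2)
  have hc : Pairwise fun i j => c i ≠ c j := fun i j hij =>
    hx _ ⟨by omega, by omega⟩ _ ⟨by omega, by omega⟩ (by simpa using Fin.val_ne_of_ne hij)
  obtain ⟨r, hr, hrS, hdisj⟩ := exists_radius_pairwise_disjoint_balls_notMem hc
    (countable_range fun p : ℕ × Fin N => dist (x p.1) (c p.2))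
  let U k := ball (c k) r
  refine ⟨completeToPartition U ⟨0, hN⟩, measurableSet_completeToPartition _ _
    (fun _ => measurableSet_ball), pairwise_disjoint_completeToPartition _ _ hdisj,
    iUnion_completeToPartition _ _, fun j => ?_, fun i _ j hi => ?_⟩
  · exact isOpen_ball.subset_interior_iff.2 (subset_completeToPartition U _ j) (mem_ball_self hr)
  · obtain ⟨k, hk⟩ := mem_iUnion.1 (frontier_completeToPartition_subset _ _ j hi)
    exact hrS ⟨(i, k), frontier_ball_subset_sphere hk⟩
end

section
/- Let $N \geq 2$, let $c(x_1,\dotsc,x_N) = \sum_{i<j} \omega(|x_i - x_j|)^{-1}$ be a repulsive cost, and define $\rho \in \mathcal{P}(\mathbb{R}^d)$ by $\rho = \frac{1}{N}\delta_0 + \frac{N-1}{N} f \mathcal{L}^d$ where $f(x) = \chi_{B(0,1)}(x)\, \omega'(|x|) / (k |x|^{d-1})$ and $k = \alpha_d \omega(1)$. Then every probability measure $P$ on $(\mathbb{R}^d)^N$ with all marginals equal to $\rho$ satisfies $\int c \, dP = +\infty$. In particular the concentration $\mu(\rho) = 1/N$ is sharp for finiteness of the multimarginal transport cost. -/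
/-!
If two coordinates of `X ~ P` vanish together with positive probability, the cost is infinite on
that event. Otherwise the events `{X i = 0}`, each of probability `ρ {0} = 1/N`, are almost
disjoint, so almost surely some coordinate vanishes. Then for any fixed `j` the cost dominates
`1 / ω ‖X j‖` off `{X j = 0}`, and integrating this against the marginal `ρ` gives at least
`(N-1)/N · ∫ f(x) / ω ‖x‖ dx`. In polar coordinates the factor `‖x‖^(d-1)` of `f` cancels, leaving
a multiple of `∫₀¹ ω'/ω`, which diverges because `log ω → -∞` at `0`.
-/

open MeasureTheory Set Metric Filter Topology
open scoped ENNReal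

theorem lintegral_deriv_div_self_eq_top {f : ℝ → ℝ} {b : ℝ} (hb : 0 < b)
    (hf_mono : MonotoneOn f (Ioo 0 b)) (hf_diff : ∀ x ∈ Ioo 0 b, DifferentiableAt ℝ f x)
    (hf_pos : ∀ x ∈ Ioo 0 b, 0 < f x) (hf_lim : Tendsto f (𝓝[>] 0) (𝓝 0)) :
    ∫⁻ x in Ioo 0 b, ENNReal.ofReal (deriv f x / f x) = ⊤ := by
  by_contra hfin
  have hnonneg : ∀ x ∈ Ioo 0 b, 0 ≤ deriv f x / f x := by
    intro x hx
    rw [← derivWithin_of_mem_nhds (Ioo_mem_nhds hx.1 hx.2)]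
    exact div_nonneg hf_mono.derivWithin_nonneg (hf_pos x hx).le
  have hint : IntervalIntegrable (fun x => deriv f x / f x) volume 0 b := by
    refine (intervalIntegrable_iff_integrableOn_Ioo_of_le hb.le).2
      ⟨((measurable_deriv f).aemeasurable.div (ContinuousOn.aemeasurable
        (fun x hx => (hf_diff x hx).continuousAt.continuousWithinAt)
        measurableSet_Ioo)).aestronglyMeasurable, ?_⟩
    rw [hasFiniteIntegral_iff_ofReal ((ae_restrict_iff' measurableSet_Ioo).2 (.of_forall hnonneg))]
    exact lt_top_iff_ne_top.2 hfin
  have hlog_deriv : ∀ᶠ x in 𝓝[>] 0, HasDerivAt (fun x => Real.log (f x)) (deriv f x / f x) x := by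
    filter_upwards [Ioo_mem_nhdsGT hb] with x hx
    exact (hf_diff x hx).hasDerivAt.log (hf_pos x hx).ne'
  have hf_lim' : Tendsto f (𝓝[>] 0) (𝓝[>] 0) :=
    tendsto_nhdsWithin_iff.2 ⟨hf_lim, by filter_upwards [Ioo_mem_nhdsGT hb] using hf_pos⟩
  refine not_intervalIntegrable_of_tendsto_norm_atTop_of_deriv_isBigO_filter (𝓝[>] 0)
    (by rw [uIcc_of_le hb.le]; exact Icc_mem_nhdsGT hb)
    (hlog_deriv.mono fun x hx => hx.differentiableAt)
    (tendsto_abs_atBot_atTop.comp (Real.tendsto_log_nhdsGT_zero.comp hf_lim'))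
    (EventuallyEq.isBigO (hlog_deriv.mono fun x hx => hx.deriv)) hint

local notation "dim" => Module.finrank ℝ

section Polar

variable {E : Type*} [NormedAddCommGroup E] [NormedSpace ℝ E] [MeasurableSpace E] [BorelSpace E]
  [FiniteDimensional ℝ E] [Nontrivial E] (μ : Measure E) [μ.IsAddHaarMeasure]

theorem lintegral_fun_norm_addHaar {F : ℝ → ℝ≥0∞} (hF : Measurable F) :
    ∫⁻ x, F ‖x‖ ∂μ = dim E * μ (ball 0 1) *
      ∫⁻ r in Ioi (0 : ℝ), ENNReal.ofReal (r ^ (dim E - 1)) * F r := by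
  have hF' : Measurable fun r : Ioi (0 : ℝ) => F r := hF.comp measurable_subtype_coe
  calc ∫⁻ x, F ‖x‖ ∂μ = ∫⁻ x : ({0}ᶜ : Set E), F ‖x.1‖ ∂μ.comap (↑) := by
        rw [lintegral_subtype_comap (measurableSet_singleton _).compl fun x => F ‖x‖,
          restrict_compl_singleton]
    _ = ∫⁻ p, F p.2 ∂μ.toSphere.prod (.volumeIoiPow (dim E - 1)) := by
        simpa using μ.measurePreserving_homeomorphUnitSphereProd.lintegral_comp
          (hF'.comp measurable_snd)
    _ = μ.toSphere univ * ∫⁻ r : Ioi (0 : ℝ), F r ∂.volumeIoiPow (dim E - 1) := by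
        rw [← lintegral_map hF' measurable_snd, Measure.map_snd_prod, lintegral_smul_measure,
          smul_eq_mul]
    _ = _ := by
        rw [Measure.volumeIoiPow, lintegral_withDensity_eq_lintegral_mul _ (by fun_prop) hF',
          Measure.toSphere_apply_univ]
        exact congrArg _ (lintegral_subtype_comap measurableSet_Ioi
          fun r => ENNReal.ofReal (r ^ (dim E - 1)) * F r)

theorem lintegral_indicator_deriv_div_mul_inv_eq_top {ω : ℝ → ℝ} {k : ℝ} (hk : 0 < k)
    (hω_cont : ContinuousOn ω (Ici 0)) (hω_mono : StrictMonoOn ω (Ici 0))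
    (hω_diff : ∀ r : ℝ, 0 < r → DifferentiableAt ℝ ω r) (hω0 : ω 0 = 0) :
    ∫⁻ x, (ball (0 : E) 1).indicator
        (fun x => ENNReal.ofReal (deriv ω ‖x‖ / (k * ‖x‖ ^ (dim E - 1)))) x *
      ({0}ᶜ : Set E).indicator (fun x => (ENNReal.ofReal (ω ‖x‖))⁻¹) x ∂μ = ⊤ := by
  have hω_pos : ∀ r : ℝ, 0 < r → 0 < ω r := fun r hr => hω0 ▸ hω_mono self_mem_Ici hr.le hr
  -- `ω ∘ |·|` is continuous on all of `ℝ`, which makes `F` measurable.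
  set F : ℝ → ℝ≥0∞ := (Ioo 0 1).indicator
    fun r => ENNReal.ofReal (deriv ω r / (k * r ^ (dim E - 1)) / ω |r|)
  have hF_meas : Measurable F := by
    refine Measurable.indicator (ENNReal.measurable_ofReal.comp ?_) measurableSet_Ioo
    exact ((measurable_deriv ω).div (by fun_prop)).div
      (hω_cont.comp_continuous continuous_abs abs_nonneg).measurable
  have h_radial : ∀ x : E, (ball (0 : E) 1).indicator
        (fun x => ENNReal.ofReal (deriv ω ‖x‖ / (k * ‖x‖ ^ (dim E - 1)))) x *
      ({0}ᶜ : Set E).indicator (fun x => (ENNReal.ofReal (ω ‖x‖))⁻¹) x = F ‖x‖ := by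
    intro x
    by_cases hx0 : x = 0
    · simp [F, hx0]
    by_cases hx1 : ‖x‖ < 1
    · have hx : ‖x‖ ∈ Ioo 0 1 := ⟨norm_pos_iff.2 hx0, hx1⟩
      simp only [F, indicator_of_mem hx, indicator_of_mem (mem_ball_zero_iff.2 hx1),
        indicator_of_mem (show x ∈ ({0}ᶜ : Set E) from hx0), abs_norm, ← div_eq_mul_inv]
      rw [ENNReal.ofReal_div_of_pos (hω_pos _ hx.1)]
    · simp [F, hx1]
  have h_polar : ∀ r ∈ Ioi (0 : ℝ), ENNReal.ofReal (r ^ (dim E - 1)) * F r =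
      (Ioo 0 1).indicator (fun r => ENNReal.ofReal (deriv ω r / ω r) * ENNReal.ofReal k⁻¹) r := by
    intro r hr
    by_cases hr1 : r ∈ Ioo 0 1
    · simp only [F, indicator_of_mem hr1, abs_of_pos hr.out]
      rw [← ENNReal.ofReal_mul (pow_nonneg hr.out.le _),
        ← ENNReal.ofReal_mul' (inv_nonneg.2 hk.le)]
      congr 1
      have : r ^ (dim E - 1) ≠ 0 := pow_ne_zero _ hr.out.ne'
      field_simp
    · simp [F, hr1]
  rw [lintegral_congr h_radial, lintegral_fun_norm_addHaar μ hF_meas,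
    setLIntegral_congr_fun measurableSet_Ioi h_polar, lintegral_indicator measurableSet_Ioo,
    Measure.restrict_restrict measurableSet_Ioo, inter_eq_left.2 Ioo_subset_Ioi_self,
    lintegral_mul_const' _ _ ENNReal.ofReal_ne_top,
    lintegral_deriv_div_self_eq_top one_pos
      (hω_mono.monotoneOn.mono (Ioo_subset_Ioi_self.trans Ioi_subset_Ici_self)) ?_ ?_ ?_,
    ENNReal.top_mul (by simpa using hk), ENNReal.mul_top]
  · exact mul_ne_zero (by simpa using Module.finrank_pos.ne') (measure_ball_pos μ 0 one_pos).ne'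
  · exact fun r hr => hω_diff r hr.1
  · exact fun r hr => hω_pos r hr.1
  · simpa [hω0] using ((hω_cont 0 self_mem_Ici).mono Ioi_subset_Ici_self).tendsto

theorem lintegral_indicator_inv_add_smul_withDensity_eq_top (ν : Measure E) {c : ℝ≥0∞}
    (hc : c ≠ 0) {ω : ℝ → ℝ} {k : ℝ} (hk : 0 < k) (hω_cont : ContinuousOn ω (Ici 0))
    (hω_mono : StrictMonoOn ω (Ici 0)) (hω_diff : ∀ r : ℝ, 0 < r → DifferentiableAt ℝ ω r)
    (hω0 : ω 0 = 0) :
    ∫⁻ x, ({0}ᶜ : Set E).indicator (fun x => (ENNReal.ofReal (ω (dist x 0)))⁻¹) x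
      ∂(ν + c • μ.withDensity ((ball 0 1).indicator
        fun x => ENNReal.ofReal (deriv ω ‖x‖ / (k * ‖x‖ ^ (dim E - 1))))) = ⊤ := by
  have hf : Measurable ((ball (0 : E) 1).indicator
      fun x => ENNReal.ofReal (deriv ω ‖x‖ / (k * ‖x‖ ^ (dim E - 1)))) :=
    (ENNReal.measurable_ofReal.comp (((measurable_deriv ω).comp measurable_norm).div
      (by fun_prop))).indicator measurableSet_ball
  have hg : Measurable (({0}ᶜ : Set E).indicator fun x => (ENNReal.ofReal (ω (dist x 0)))⁻¹) :=
    (ENNReal.measurable_ofReal.comp (hω_cont.comp_continuous (by fun_prop)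
      fun x => dist_nonneg).measurable).inv.indicator (measurableSet_singleton 0).compl
  rw [lintegral_add_measure, lintegral_smul_measure,
    lintegral_withDensity_eq_lintegral_mul _ hf hg]
  simp only [Pi.mul_apply, dist_zero_right,
    lintegral_indicator_deriv_div_mul_inv_eq_top μ hk hω_cont hω_mono hω_diff hω0,
    smul_eq_mul, ENNReal.mul_top hc, add_top]

end Polar

theorem ae_exists_mem_of_pairwise_aedisjoint {α ι : Type*} [MeasurableSpace α] [Countable ι]
    {μ : Measure α} [IsFiniteMeasure μ] {A : ι → Set α} (hA : ∀ i, NullMeasurableSet (A i) μ)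
    (hdisj : Pairwise fun i j => AEDisjoint μ (A i) (A j)) (hsum : ∑' i, μ (A i) = μ univ) :
    ∀ᵐ x ∂μ, ∃ i, x ∈ A i := by
  have hcover := (ae_mem_iff_measure_eq (.iUnion hA)).2 ((measure_iUnion₀ hdisj hA).trans hsum)
  simpa only [mem_iUnion] using hcover

section PairCost

variable {E : Type*} [PseudoMetricSpace E] {N : ℕ} (φ : ℝ → ℝ≥0∞)

theorem le_sum_pairs_of_ne (X : Fin N → E) {i j : Fin N} (hij : i ≠ j) :
    φ (dist (X i) (X j)) ≤ ∑ p ∈ Finset.univ.filter (fun p : Fin N × Fin N => p.1 < p.2),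
      φ (dist (X p.1) (X p.2)) := by
  have h_single {a b : Fin N} (hab : a < b) := Finset.single_le_sum
    (f := fun p : Fin N × Fin N => φ (dist (X p.1) (X p.2))) (fun _ _ => zero_le)
    (show (a, b) ∈ Finset.univ.filter (fun p : Fin N × Fin N => p.1 < p.2) by simpa using hab)
  rcases hij.lt_or_gt with h | h
  · exact h_single h
  · exact dist_comm (X i) (X j) ▸ h_single h

variable [MeasurableSpace E] {P : Measure (Fin N → E)}

theorem lintegral_sum_pairs_eq_top_of_collision (hφ : φ 0 = ⊤) {S : Set (Fin N → E)}
    (hS : MeasurableSet S) (hPS : P S ≠ 0) {i j : Fin N} (hij : i ≠ j)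
    (hS_eq : ∀ X ∈ S, X i = X j) :
    ∫⁻ X, (∑ p ∈ Finset.univ.filter (fun p : Fin N × Fin N => p.1 < p.2),
      φ (dist (X p.1) (X p.2))) ∂P = ⊤ := by
  refine top_unique ?_
  calc ⊤ = ∫⁻ X, S.indicator (fun _ => ⊤) X ∂P := by
        rw [lintegral_indicator_const hS, ENNReal.top_mul hPS]
    _ ≤ _ := by
        refine lintegral_mono fun X => ?_
        by_cases hX : X ∈ S
        · simpa [hX, hS_eq X hX, hφ] using le_sum_pairs_of_ne φ X hij
        · simp [hX]

theorem lintegral_indicator_le_lintegral_sum_pairs {a : E} (hcover : ∀ᵐ X ∂P, ∃ i, X i = a)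
    (j : Fin N) :
    ∫⁻ X, ({a}ᶜ : Set E).indicator (fun x => φ (dist x a)) (X j) ∂P ≤
      ∫⁻ X, (∑ p ∈ Finset.univ.filter (fun p : Fin N × Fin N => p.1 < p.2),
        φ (dist (X p.1) (X p.2))) ∂P := by
  refine lintegral_mono_ae (hcover.mono fun X ⟨i, hi⟩ => ?_)
  by_cases hj : X j = a
  · simp [hj]
  · rw [indicator_of_mem hj, ← hi]
    exact le_sum_pairs_of_ne φ X fun hji => hj (hji ▸ hi)

end PairCost

theorem sharpness_concentration_one_over_N
    {d N : ℕ} (hd : 1 ≤ d) (hN : 2 ≤ N)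
    (ω : ℝ → ℝ)
    (hω_cont : ContinuousOn ω (Set.Ici 0))
    (hω_mono : StrictMonoOn ω (Set.Ici 0))
    (hω_diff : ∀ r : ℝ, 0 < r → DifferentiableAt ℝ ω r)
    (hω0 : ω 0 = 0)
    (k : ℝ)
    (hk : k = (volume (Metric.ball (0 : EuclideanSpace ℝ (Fin d)) 1)).toReal * ω 1)
    (ρ : Measure (EuclideanSpace ℝ (Fin d)))
    (hρ : ρ = ((N : ℝ≥0∞))⁻¹ • Measure.dirac (0 : EuclideanSpace ℝ (Fin d)) +
      (((N : ℝ≥0∞) - 1) / N) • volume.withDensity (fun x =>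
        Set.indicator (Metric.ball (0 : EuclideanSpace ℝ (Fin d)) 1)
          (fun x => ENNReal.ofReal (deriv ω ‖x‖ / (k * ‖x‖ ^ (d - 1)))) x)) :
    ∀ P : Measure (Fin N → EuclideanSpace ℝ (Fin d)),
      IsProbabilityMeasure P →
      (∀ i : Fin N, Measure.map (fun X => X i) P = ρ) →
      ∫⁻ X, (∑ p ∈ Finset.univ.filter (fun p : Fin N × Fin N => p.1 < p.2),
        (ENNReal.ofReal (ω (dist (X p.1) (X p.2))))⁻¹) ∂P = ⊤ := by
  intro P hP hmarg
  have : Nontrivial (EuclideanSpace ℝ (Fin d)) :=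
    Module.nontrivial_of_finrank_pos (R := ℝ) (by rw [finrank_euclideanSpace_fin]; omega)
  have hk_pos : 0 < k := hk ▸ mul_pos (ENNReal.toReal_pos (measure_ball_pos volume 0 one_pos).ne'
    measure_ball_lt_top.ne) (hω0 ▸ hω_mono self_mem_Ici (mem_Ici.2 zero_le_one) one_pos)
  set A : Fin N → Set (Fin N → EuclideanSpace ℝ (Fin d)) := fun i => {X | X i = 0}
  have hA_meas : ∀ i, MeasurableSet (A i) := fun i =>
    measurable_pi_apply i (measurableSet_singleton 0)
  have hA : ∀ i, P (A i) = (N : ℝ≥0∞)⁻¹ := by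
    intro i
    change P ((fun X => X i) ⁻¹' {0}) = _
    rw [← Measure.map_apply (measurable_pi_apply i) (measurableSet_singleton 0), hmarg i, hρ]
    simp
  by_cases hdisj : Pairwise fun i j => AEDisjoint P (A i) (A j)
  · have hcover := ae_exists_mem_of_pairwise_aedisjoint (fun i => (hA_meas i).nullMeasurableSet)
      hdisj (by
        simpa [hA] using ENNReal.mul_inv_cancel (by simp; omega) (ENNReal.natCast_ne_top N))
    have hc : ((N : ℝ≥0∞) - 1) / N ≠ 0 :=
      ENNReal.div_ne_zero.2 ⟨(tsub_pos_of_lt (by exact_mod_cast hN)).ne', ENNReal.natCast_ne_top N⟩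
    have hρ_top := lintegral_indicator_inv_add_smul_withDensity_eq_top volume
      ((N : ℝ≥0∞)⁻¹ • Measure.dirac (0 : EuclideanSpace ℝ (Fin d))) hc hk_pos hω_cont hω_mono
      hω_diff hω0
    rw [finrank_euclideanSpace_fin, ← hρ, ← hmarg ⟨0, by omega⟩] at hρ_top
    exact top_unique (hρ_top ▸ (lintegral_map_le _ _).trans
      (lintegral_indicator_le_lintegral_sum_pairs (fun r => (ENNReal.ofReal (ω r))⁻¹) hcover _))
  · obtain ⟨i, j, hij, hPij⟩ : ∃ i j, i ≠ j ∧ P (A i ∩ A j) ≠ 0 := by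
      simpa [Pairwise, AEDisjoint] using hdisj
    exact lintegral_sum_pairs_eq_top_of_collision (fun r => (ENNReal.ofReal (ω r))⁻¹)
      (by simp [hω0]) ((hA_meas i).inter (hA_meas j)) hPij hij fun X hX => hX.1.trans hX.2.symm
end
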